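/- arXiv:1904.01600 — 7 statements merged into one kernel-verified Lean document; each statement's English description precedes it below -/
import Mathlib

section
/- If G is a quasi-line graph, then for every vertex x of G, the b-chromatic number of the vertex-deleted subgraph satisfies b(G - {x}) ≥ b(G) - 2. -/
/-- A b-coloring of `G` with `k` colors: a proper vertex coloring `c : V → Fin k` such
that every color class contains a vertex adjacent to a vertex of every other color class. -/
def SimpleGraph.IsBColoring {V : Type*} (G : SimpleGraph V) {k : ℕ} (c : V → Fin k) : Prop :=
  (∀ u v, G.Adj u v → c u ≠ c v) ∧
    ∀ i : Fin k, ∃ v, c v = i ∧ ∀ j : Fin k, j ≠ i → ∃ u, G.Adj v u ∧ c u = j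

/-- The b-chromatic number of `G`: the largest `k` such that `G` admits a b-coloring
with `k` colors. -/
noncomputable def SimpleGraph.bChromaticNumber {V : Type*} (G : SimpleGraph V) : ℕ :=
  sSup {k | ∃ c : V → Fin k, G.IsBColoring c}

/-- A quasi-line graph: the neighborhood of each vertex is covered by at most two cliques. -/
def SimpleGraph.IsQuasiLine {V : Type*} (G : SimpleGraph V) : Prop :=
  ∀ v : V, ∃ A B : Set V, G.IsClique A ∧ G.IsClique B ∧ G.neighborSet v ⊆ A ∪ B

/-!
Let `c` be a b-coloring of `G` with `k` colors and `a = c x`. In `G - x` a class `i ≠ a` can only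
lose its b-vertex `v` if `x` was the unique neighbor of `v` colored `a`; then `v` is adjacent to
`x`, so it lies in one of the two cliques covering the neighborhood of `x`. If the class `a` itself
has no b-vertex left, dissolving it into the other classes gives a b-coloring with `k - 1` colors.
Otherwise, dissolve one deficient class `j` whose vertex `v` lies in the first clique, giving `v`
the color `a`: every other deficient class with such a vertex in that clique now sees `a` through
`v`. Doing the same for the second clique costs at most two colors in total.
-/

open Finset

namespace SimpleGraph

variable {W α : Type*} {H : SimpleGraph W}

def IsBVertex (d : H.Coloring α) (P : Finset α) (v : W) : Prop :=
  ∀ m ∈ P, m ≠ d v → ∃ u, H.Adj v u ∧ d u = m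

def HasBVertex (d : H.Coloring α) (P : Finset α) (i : α) : Prop :=
  ∃ v, d v = i ∧ IsBVertex d P v

def IsBColoringOn (d : H.Coloring α) (P : Finset α) : Prop :=
  (∀ w, d w ∈ P) ∧ ∀ i ∈ P, HasBVertex d P i

section DecidableEq

variable [DecidableEq α]

def IsAlmostBVertex (d : H.Coloring α) (P : Finset α) (a : α) (v : W) : Prop :=
  IsBVertex d (P.erase a) v ∧ ∀ u, H.Adj v u → d u ≠ a

def IsNearBColoringOn (d : H.Coloring α) (P : Finset α) (a : α) (T : Set W) : Prop :=
  (∀ w, d w ∈ P) ∧ a ∈ P ∧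
    ∀ i ∈ P, HasBVertex d P i ∨ ∃ v ∈ T, d v = i ∧ IsAlmostBVertex d P a v

variable {d d' : H.Coloring α} {P : Finset α} {a j : α} {v : W}

theorem IsBVertex.of_erase_of_adj (hv : IsBVertex d (P.erase a) v) {u : W} (hvu : H.Adj v u)
    (hu : d u = a) : IsBVertex d P v := by
  intro m hm hmv
  by_cases hma : m = a
  · exact ⟨u, hvu, hu.trans hma.symm⟩
  · exact hv m (mem_erase.mpr ⟨hma, hm⟩) hmv

theorem IsBVertex.or_isAlmostBVertex (hv : IsBVertex d (P.erase a) v) :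
    IsBVertex d P v ∨ IsAlmostBVertex d P a v := by
  by_cases h : ∃ u, H.Adj v u ∧ d u = a
  · obtain ⟨u, hvu, hu⟩ := h
    exact .inl (hv.of_erase_of_adj hvu hu)
  · push Not at h
    exact .inr ⟨hv, h⟩

theorem IsAlmostBVertex.isBVertex_of_color_eq (hv : IsAlmostBVertex d P a v) (ha : d v = a) :
    IsBVertex d P v := by
  intro m hm hmv
  exact hv.1 m (mem_erase.mpr ⟨ha ▸ hmv, hm⟩) hmv

theorem IsBVertex.recolor (hd' : ∀ w, d w ≠ j → d' w = d w) (hvj : d v ≠ j)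
    (hv : IsBVertex d P v) : IsBVertex d' (P.erase j) v := by
  intro m hm hmv
  obtain ⟨hmj, hmP⟩ := mem_erase.mp hm
  obtain ⟨u, hvu, hu⟩ := hv m hmP (hd' v hvj ▸ hmv)
  exact ⟨u, hvu, (hd' u (hu ▸ hmj)).trans hu⟩

theorem HasBVertex.recolor (hd' : ∀ w, d w ≠ j → d' w = d w) {i : α} (hij : i ≠ j)
    (hi : HasBVertex d P i) : HasBVertex d' (P.erase j) i := by
  obtain ⟨v, hvi, hv⟩ := hi
  have hvj : d v ≠ j := hvi ▸ hij
  exact ⟨v, (hd' v hvj).trans hvi, hv.recolor hd' hvj⟩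

theorem exists_free_color_of_not_hasBVertex (hj : ¬ HasBVertex d P j) {u : W} (hu : d u = j) :
    ∃ m ∈ P.erase j, ∀ w, H.Adj u w → d w ≠ m := by
  by_contra! h
  refine hj ⟨u, hu, fun m hm hmu => ?_⟩
  obtain ⟨w, huw, hw⟩ := h m (mem_erase.mpr ⟨hu ▸ hmu, hm⟩)
  exact ⟨w, huw, hw⟩

theorem exists_recolor_of_not_hasBVertex (hdP : ∀ w, d w ∈ P) (hj : ¬ HasBVertex d P j)
    (a : α) :
    ∃ d' : H.Coloring α, (∀ w, d' w ∈ P.erase j) ∧ (∀ w, d w ≠ j → d' w = d w) ∧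
      ∀ v, d v = j → a ∈ P.erase j → (∀ u, H.Adj v u → d u ≠ a) → d' v = a := by
  have hcolor : ∀ u, ∃ m, (d u = j → m ∈ P.erase j ∧ ∀ w, H.Adj u w → d w ≠ m) ∧
      (d u ≠ j → m = d u) ∧
      (d u = j → a ∈ P.erase j → (∀ w, H.Adj u w → d w ≠ a) → m = a) := by
    intro u
    by_cases hu : d u = j
    · by_cases ha : a ∈ P.erase j ∧ ∀ w, H.Adj u w → d w ≠ a
      · exact ⟨a, fun _ => ha, fun h => absurd hu h, fun _ _ _ => rfl⟩
      · obtain ⟨m, hm, hfree⟩ := exists_free_color_of_not_hasBVertex hj hu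
        exact ⟨m, fun _ => ⟨hm, hfree⟩, fun h => absurd hu h,
          fun _ ha' hfree' => absurd ⟨ha', hfree'⟩ ha⟩
    · exact ⟨d u, fun h => absurd h hu, fun _ => rfl, fun h => absurd h hu⟩
  choose g hg_free hg_eq hg_a using hcolor
  refine ⟨Coloring.mk g fun {u w} huw => ?_, fun w => ?_, hg_eq, hg_a⟩
  · by_cases hu : d u = j <;> by_cases hw : d w = j
    · exact absurd (hu.trans hw.symm) (d.valid huw)
    · rw [hg_eq w hw]
      exact fun h => (hg_free u hu).2 w huw h.symm
    · rw [hg_eq u hu]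
      exact (hg_free w hw).2 u huw.symm
    · rw [hg_eq u hu, hg_eq w hw]
      exact d.valid huw
  · by_cases hw : d w = j
    · exact (hg_free w hw).1
    · show g w ∈ P.erase j
      rw [hg_eq w hw]
      exact mem_erase.mpr ⟨hw, hdP w⟩

/-- Dissolving a deficient class whose almost b-vertex lies in the clique `C` into color `a`
gives every other almost b-vertex in `C` a neighbor colored `a`. -/
theorem IsNearBColoringOn.exists_of_isClique {C T : Set W} (hC : H.IsClique C)
    (hd : IsNearBColoringOn d P a (C ∪ T)) :
    ∃ (P' : Finset α) (d' : H.Coloring α), #P ≤ #P' + 1 ∧ IsNearBColoringOn d' P' a T := by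
  obtain ⟨hdP, haP, hcls⟩ := hd
  by_cases hex : ∃ j ∈ P, ¬ HasBVertex d P j ∧ ∃ v ∈ C, d v = j ∧ IsAlmostBVertex d P a v
  · obtain ⟨j, hjP, hj, vj, hvjC, hvj, hvj_almost⟩ := hex
    have haj : a ≠ j := fun h => hj ⟨vj, hvj, hvj_almost.isBVertex_of_color_eq (hvj.trans h.symm)⟩
    have haP' : a ∈ P.erase j := mem_erase.mpr ⟨haj, haP⟩
    obtain ⟨d', hd'P, hd'eq, hd'a⟩ := exists_recolor_of_not_hasBVertex hdP hj a
    have hvj_a : d' vj = a := hd'a vj hvj haP' hvj_almost.2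
    refine ⟨P.erase j, d', (card_erase_add_one hjP).ge, hd'P, haP', fun i hi => ?_⟩
    have hij : i ≠ j := (mem_erase.mp hi).1
    rcases hcls i (mem_erase.mp hi).2 with hib | ⟨v, hvCT, hvi, hv⟩
    · exact .inl (hib.recolor hd'eq hij)
    have hvj' : d v ≠ j := hvi ▸ hij
    have hv' : IsBVertex d' ((P.erase j).erase a) v := by
      rw [erase_right_comm]
      exact hv.1.recolor hd'eq hvj'
    have hd'v : d' v = i := (hd'eq v hvj').trans hvi
    rcases hvCT with hvC | hvT
    · have hvvj : v ≠ vj := fun h => hij (hvi ▸ h ▸ hvj)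
      exact .inl ⟨v, hd'v, hv'.of_erase_of_adj (hC hvC hvjC hvvj) hvj_a⟩
    · rcases hv'.or_isAlmostBVertex with hvb | hva
      · exact .inl ⟨v, hd'v, hvb⟩
      · exact .inr ⟨v, hvT, hd'v, hva⟩
  · push Not at hex
    refine ⟨P, d, Nat.le_succ _, hdP, haP, fun i hi => ?_⟩
    rcases hcls i hi with hib | ⟨v, hvCT, hvi, hv⟩
    · exact .inl hib
    by_cases hib : HasBVertex d P i
    · exact .inl hib
    rcases hvCT with hvC | hvT
    · exact absurd hv (hex i hi hib v hvC hvi)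
    · exact .inr ⟨v, hvT, hvi, hv⟩

theorem IsNearBColoringOn.isBColoringOn_of_empty (hd : IsNearBColoringOn d P a ∅) :
    IsBColoringOn d P :=
  ⟨hd.1, fun i hi => (hd.2.2 i hi).resolve_right fun ⟨_, hv, _⟩ => hv⟩

end DecidableEq

theorem IsBColoringOn.exists_isBColoring {d : H.Coloring α} {P : Finset α}
    (hd : IsBColoringOn d P) : ∃ c : W → Fin #P, H.IsBColoring c := by
  set e := P.equivFin
  have he : ∀ w (i : Fin #P), e ⟨d w, hd.1 w⟩ = i ↔ d w = e.symm i := fun w i =>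
    e.eq_symm_apply.symm.trans Subtype.ext_iff
  refine ⟨fun w => e ⟨d w, hd.1 w⟩, fun u v huv h => d.valid huv ?_, fun i => ?_⟩
  · exact congrArg Subtype.val (e.injective h)
  obtain ⟨v, hvi, hv⟩ := hd.2 _ (e.symm i).2
  refine ⟨v, (he v i).mpr hvi, fun j hji => ?_⟩
  have hne : (e.symm j : α) ≠ d v := by
    rw [hvi]
    exact fun h => hji (e.symm.injective (Subtype.ext h))
  obtain ⟨u, hvu, hu⟩ := hv _ (e.symm j).2 hne
  exact ⟨u, hvu, (he u j).mpr hu⟩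

variable {V : Type*} {G : SimpleGraph V} {k : ℕ} {c : V → Fin k}

theorem bddAbove_setOf_isBColoring [Finite V] (G : SimpleGraph V) :
    BddAbove {k | ∃ c : V → Fin k, G.IsBColoring c} := by
  refine ⟨Nat.card V, fun k ⟨c, hc⟩ => ?_⟩
  simpa using Nat.card_le_card_of_surjective c fun i => (hc.2 i).imp fun _ h => h.1

theorem IsBColoring.le_bChromaticNumber [Finite V] (hc : G.IsBColoring c) :
    k ≤ G.bChromaticNumber :=
  le_csSup G.bddAbove_setOf_isBColoring ⟨c, hc⟩

theorem exists_isBColoring_bChromaticNumber [Finite V] (h : G.bChromaticNumber ≠ 0) :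
    ∃ c : V → Fin G.bChromaticNumber, G.IsBColoring c := by
  refine Nat.sSup_mem (Set.nonempty_iff_ne_empty.mpr fun hempty => h ?_)
    G.bddAbove_setOf_isBColoring
  rw [bChromaticNumber, hempty, csSup_empty, bot_eq_zero]

theorem IsBColoringOn.card_le_bChromaticNumber [Finite W] {d : H.Coloring α} {P : Finset α}
    (hd : IsBColoringOn d P) : #P ≤ H.bChromaticNumber := by
  obtain ⟨c, hc⟩ := hd.exists_isBColoring
  exact hc.le_bChromaticNumber

def IsBColoring.toColoringInduce (hc : G.IsBColoring c) (s : Set V) :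
    (G.induce s).Coloring (Fin k) :=
  Coloring.mk (fun v => c v) fun huv => hc.1 _ _ huv

theorem IsBColoring.exists_isBVertex_induce_compl (hc : G.IsBColoring c) (x : V) {i : Fin k}
    (hi : i ≠ c x) :
    ∃ v : ({x}ᶜ : Set V), c v = i ∧
      IsBVertex (hc.toColoringInduce {x}ᶜ) (univ.erase (c x)) v ∧
      (IsAlmostBVertex (hc.toColoringInduce {x}ᶜ) univ (c x) v → G.Adj x v) := by
  obtain ⟨v, hvi, hv⟩ := hc.2 i
  have hvx : v ≠ x := fun h => hi (by rw [← hvi, h])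
  refine ⟨⟨v, hvx⟩, hvi, fun m hm hmv => ?_, fun ⟨_, hno⟩ => ?_⟩
  · obtain ⟨u, hvu, hu⟩ := hv m (hvi ▸ hmv)
    have hux : u ≠ x := fun h => (mem_erase.mp hm).1 (by rw [← hu, h])
    exact ⟨⟨u, hux⟩, hvu, hu⟩
  · obtain ⟨u, hvu, hu⟩ := hv (c x) hi.symm
    by_cases hux : u = x
    · exact hux ▸ hvu.symm
    · exact absurd hu (hno ⟨u, hux⟩ hvu)

theorem IsQuasiLine.exists_isBColoringOn_induce_compl (hG : G.IsQuasiLine)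
    (hc : G.IsBColoring c) (x : V) :
    ∃ (P : Finset (Fin k)) (d : (G.induce {x}ᶜ).Coloring (Fin k)),
      k ≤ #P + 2 ∧ IsBColoringOn d P := by
  set d := hc.toColoringInduce {x}ᶜ
  set a := c x
  by_cases ha : HasBVertex d univ a
  · obtain ⟨A, B, hA, hB, hAB⟩ := hG x
    have hnear : IsNearBColoringOn d univ a (Subtype.val ⁻¹' A ∪ (Subtype.val ⁻¹' B ∪ ∅)) := by
      refine ⟨fun _ => mem_univ _, mem_univ _, fun i _ => ?_⟩
      by_cases hia : i = a
      · exact .inl (hia ▸ ha)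
      obtain ⟨v, hvi, hv, hvx⟩ := hc.exists_isBVertex_induce_compl x hia
      rcases hv.or_isAlmostBVertex with hvb | hva
      · exact .inl ⟨v, hvi, hvb⟩
      · exact .inr ⟨v, by simpa using hAB (hvx hva), hvi, hva⟩
    have hclique {C : Set V} (hC : G.IsClique C) : (G.induce {x}ᶜ).IsClique (Subtype.val ⁻¹' C) :=
      isClique_induce_iff.mpr (hC.subset (Set.image_preimage_subset _ _))
    obtain ⟨P₁, d₁, hP₁, hnear₁⟩ := hnear.exists_of_isClique (hclique hA)
    obtain ⟨P₂, d₂, hP₂, hnear₂⟩ := hnear₁.exists_of_isClique (hclique hB)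
    refine ⟨P₂, d₂, ?_, hnear₂.isBColoringOn_of_empty⟩
    rw [card_univ, Fintype.card_fin] at hP₁
    omega
  · obtain ⟨d', hd'P, hd'eq, -⟩ := exists_recolor_of_not_hasBVertex (fun _ => mem_univ _) ha a
    refine ⟨univ.erase a, d', ?_, hd'P, fun i hi => ?_⟩
    · rw [card_erase_of_mem (mem_univ a), card_univ, Fintype.card_fin]
      omega
    obtain ⟨v, hvi, hv, -⟩ := hc.exists_isBVertex_induce_compl x (mem_erase.mp hi).1
    have hva : d v ≠ a := fun h => (mem_erase.mp hi).1 (hvi.symm.trans h)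
    rw [← erase_idem]
    exact ⟨v, (hd'eq v hva).trans hvi, hv.recolor hd'eq hva⟩

end SimpleGraph

theorem bChromaticNumber_deleteVert_ge_of_quasiLine_general {V : Type*} [Fintype V]
    (G : SimpleGraph V) (hG : G.IsQuasiLine) (x : V) :
    ((G.induce ({x}ᶜ : Set V)).bChromaticNumber : ℤ) ≥ G.bChromaticNumber - 2 := by
  rcases eq_or_ne G.bChromaticNumber 0 with h0 | h0
  · rw [h0]
    omega
  obtain ⟨c, hc⟩ := G.exists_isBColoring_bChromaticNumber h0
  obtain ⟨P, d, hP, hd⟩ := hG.exists_isBColoringOn_induce_compl hc x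
  have := hd.card_le_bChromaticNumber
  omega

theorem bChromaticNumber_deleteVert_ge_of_quasiLine {V : Type*} [Fintype V] [DecidableEq V]
    (G : SimpleGraph V) (hG : G.IsQuasiLine) (x : V) :
    ((G.induce ({x}ᶜ : Set V)).bChromaticNumber : ℤ) ≥ G.bChromaticNumber - 2 :=
  bChromaticNumber_deleteVert_ge_of_quasiLine_general G hG x
end

section
/- Let G be a chordal graph and let a, x, b be three consecutive vertices of a cycle Γ of G. If the vertex x has no neighbours in Γ outside of {a, b}, then a and b are adjacent in G. -/
/-- A walk has a chord if two of its vertices are adjacent in `G` via an edge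
not belonging to the walk. -/
def SimpleGraph.Walk.HasChord {V : Type*} {G : SimpleGraph V} {a : V} (w : G.Walk a a) : Prop :=
  ∃ u v : V, u ∈ w.support ∧ v ∈ w.support ∧ G.Adj u v ∧ s(u, v) ∉ w.edges

/-- A chordal graph: every cycle of length at least `4` has a chord. -/
def SimpleGraph.IsChordalGraph {V : Type*} (G : SimpleGraph V) : Prop :=
  ∀ (a : V) (w : G.Walk a a), w.IsCycle → 4 ≤ w.length → w.HasChord

open SimpleGraph Walk in
private lemma mem_tail_of_closed {V : Type*} {G : SimpleGraph V} {c y : V}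
    (w : G.Walk c c) (hw : 0 < w.length) : y ∈ w.support ↔ y ∈ w.support.tail := by
  cases w with
  | nil => simp at hw
  | cons h q =>
    simp only [Walk.support_cons, List.tail_cons, List.mem_cons]
    constructor
    · rintro (rfl | hy)
      · exact q.end_mem_support
      · exact hy
    · exact Or.inr

open SimpleGraph Walk in
private lemma two_le_length_of_ne {V : Type*} {G : SimpleGraph V} {u v : V}
    (w : G.Walk v u) (hvu : v ≠ u) (h : s(v, u) ∉ w.edges) : 2 ≤ w.length := by
  cases w with
  | nil => exact absurd rfl hvu
  | cons h1 w1 =>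
    cases w1 with
    | nil => simp at h
    | cons h2 w2 => simp only [Walk.length_cons]; omega

open SimpleGraph Walk in
private lemma aux_adj {V : Type*} {G : SimpleGraph V} (hG : G.IsChordalGraph) :
    ∀ n : ℕ, ∀ c : V, ∀ Γ : G.Walk c c, Γ.length ≤ n → Γ.IsCycle →
      ∀ a x b : V, a ≠ b → s(a, x) ∈ Γ.edges → s(x, b) ∈ Γ.edges →
      (∀ y ∈ Γ.support, G.Adj x y → y = a ∨ y = b) → G.Adj a b := by
  intro n
  induction n with
  | zero =>
    intro c Γ hlen hΓ a x b _ _ _ _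
    have := hΓ.three_le_length; omega
  | succ n ih =>
    intro c Γ hlen hΓ a x b hab hax hxb hnb
    classical
    by_cases h4 : 4 ≤ Γ.length
    · obtain ⟨u, v, hu, hv, huv, hne⟩ := hG c Γ hΓ h4
      -- the chord avoids x
      have hux : u ≠ x := by
        intro h
        rcases hnb v hv (h ▸ huv) with h2 | h2
        · apply hne; rw [h, h2, Sym2.eq_swap]; exact hax
        · apply hne; rw [h, h2]; exact hxb
      have hvx : v ≠ x := by
        intro h
        rcases hnb u hu (h ▸ huv.symm) with h2 | h2
        · apply hne; rw [h, h2]; exact hax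
        · apply hne; rw [h, h2, Sym2.eq_swap]; exact hxb
      have hΓpos : 0 < Γ.length := by have := hΓ.three_le_length; omega
      set Δ := Γ.rotate u hu with hΔdef
      have hΔ : Δ.IsCycle := hΓ.rotate hu
      have hE : ∀ e, e ∈ Δ.edges ↔ e ∈ Γ.edges := fun e => (Γ.rotate_edges u hu).perm.mem_iff
      have hΔlen : Δ.length = Γ.length := by
        rw [← Walk.length_edges, ← Walk.length_edges]
        exact (Γ.rotate_edges u hu).perm.length_eq
      have hΔpos : 0 < Δ.length := by omega
      have hS : ∀ y, y ∈ Δ.support ↔ y ∈ Γ.support := by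
        intro y
        rw [mem_tail_of_closed Δ hΔpos, mem_tail_of_closed Γ hΓpos]
        exact (Γ.support_rotate u hu).perm.mem_iff
      have hv' : v ∈ Δ.support := (hS v).2 hv
      set p := Δ.takeUntil v hv' with hpdef
      set q := Δ.dropUntil v hv' with hqdef
      have hspec : p.append q = Δ := Δ.take_spec hv'
      have hedges : p.edges ++ q.edges = Δ.edges := by
        rw [← Walk.edges_append, hspec]
      have htail : p.support.tail ++ q.support.tail = Δ.support.tail := by
        rw [← Walk.tail_support_append, hspec]
      have hnd : (p.support.tail ++ q.support.tail).Nodup := by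
        rw [htail]; exact hΔ.support_nodup
      have hdisj : ∀ y ∈ p.support.tail, y ∉ q.support.tail :=
        fun y hy => List.disjoint_of_nodup_append hnd hy
      have huvne : u ≠ v := huv.ne
      -- u is in q.support.tail, v is in p.support.tail
      have huq : u ∈ q.support.tail := by
        have h1 : u ∈ q.support := q.end_mem_support
        rw [q.support_eq_cons] at h1
        rcases List.mem_cons.1 h1 with h1 | h1
        · exact absurd h1 huvne
        · exact h1
      have hvp : v ∈ p.support.tail := by
        have h1 : v ∈ p.support := p.end_mem_support
        rw [p.support_eq_cons] at h1
        rcases List.mem_cons.1 h1 with h1 | h1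
        · exact absurd h1 huvne.symm
        · exact h1
      have hp_path : p.IsPath := by
        rw [Walk.isPath_def, p.support_eq_cons]
        refine List.nodup_cons.2 ⟨fun hc => hdisj u hc huq, hnd.of_append_left⟩
      have hq_path : q.IsPath := by
        rw [Walk.isPath_def, q.support_eq_cons]
        refine List.nodup_cons.2 ⟨fun hc => hdisj v hvp hc, hnd.of_append_right⟩
      -- locate the two edges at x
      have hax' : s(a, x) ∈ p.edges ∨ s(a, x) ∈ q.edges := by
        have := (hE _).2 hax; rw [← hedges] at this; exact List.mem_append.1 this
      have hxb' : s(x, b) ∈ p.edges ∨ s(x, b) ∈ q.edges := by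
        have := (hE _).2 hxb; rw [← hedges] at this; exact List.mem_append.1 this
      have hxp_of : ∀ {e : Sym2 V}, e ∈ p.edges → x ∈ e → x ∈ p.support.tail := by
        intro e he hxe
        have hx : x ∈ p.support := by
          obtain ⟨s, t⟩ := e
          rcases Sym2.mem_iff.1 hxe with rfl | rfl
          · exact p.fst_mem_support_of_mem_edges he
          · exact p.snd_mem_support_of_mem_edges he
        rw [p.support_eq_cons] at hx
        rcases List.mem_cons.1 hx with h1 | h1
        · exact absurd h1.symm hux
        · exact h1
      have hxq_of : ∀ {e : Sym2 V}, e ∈ q.edges → x ∈ e → x ∈ q.support.tail := by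
        intro e he hxe
        have hx : x ∈ q.support := by
          obtain ⟨s, t⟩ := e
          rcases Sym2.mem_iff.1 hxe with rfl | rfl
          · exact q.fst_mem_support_of_mem_edges he
          · exact q.snd_mem_support_of_mem_edges he
        rw [q.support_eq_cons] at hx
        rcases List.mem_cons.1 hx with h1 | h1
        · exact absurd h1.symm hvx
        · exact h1
      have hΔsub : ∀ y, y ∈ p.support ∨ y ∈ q.support → y ∈ Γ.support := by
        intro y hy
        refine (hS y).1 ?_
        rw [← hspec]
        rcases hy with hy | hy
        · exact Walk.subset_support_append_left _ _ hy
        · exact Walk.subset_support_append_right _ _ hy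
      have hΓlen : Γ.length = p.length + q.length := by
        rw [← hΔlen, ← hspec, Walk.length_append]
      -- both edges lie on the same side
      have hsame : (s(a, x) ∈ p.edges ∧ s(x, b) ∈ p.edges) ∨
          (s(a, x) ∈ q.edges ∧ s(x, b) ∈ q.edges) := by
        rcases hax' with h1 | h1 <;> rcases hxb' with h2 | h2
        · exact Or.inl ⟨h1, h2⟩
        · exact absurd (hxq_of h2 (by simp)) (hdisj x (hxp_of h1 (by simp)))
        · exact absurd (hxq_of h1 (by simp)) (hdisj x (hxp_of h2 (by simp)))
        · exact Or.inr ⟨h1, h2⟩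
      rcases hsame with ⟨h1, h2⟩ | ⟨h1, h2⟩
      · -- use the cycle cons huv p.reverse at u
        have hnotp : s(u, v) ∉ p.reverse.edges := by
          rw [Walk.edges_reverse, List.mem_reverse]
          intro hc
          exact hne ((hE _).1 (hedges ▸ List.mem_append_left _ hc))
        have hC : (Walk.cons huv p.reverse).IsCycle :=
          (Walk.cons_isCycle_iff _ huv).2 ⟨hp_path.reverse, hnotp⟩
        have hq2 : 2 ≤ q.length := by
          refine two_le_length_of_ne q huvne.symm fun hc => ?_
          refine hne ((hE _).1 (hedges ▸ List.mem_append_right _ ?_))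
          rwa [Sym2.eq_swap]
        have hClen : (Walk.cons huv p.reverse).length ≤ n := by
          simp only [Walk.length_cons, Walk.length_reverse]
          omega
        refine ih u (Walk.cons huv p.reverse) hClen hC a x b hab ?_ ?_ ?_
        · rw [Walk.edges_cons, List.mem_cons, Walk.edges_reverse, List.mem_reverse]
          exact Or.inr h1
        · rw [Walk.edges_cons, List.mem_cons, Walk.edges_reverse, List.mem_reverse]
          exact Or.inr h2
        · intro y hy hxy
          rw [Walk.support_cons, List.mem_cons, Walk.support_reverse, List.mem_reverse] at hy
          rcases hy with rfl | hy
          · exact hnb y hu hxy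
          · exact hnb y (hΔsub y (Or.inl hy)) hxy
      · -- use the cycle cons huv.symm q.reverse at v
        have hnotq : s(v, u) ∉ q.reverse.edges := by
          rw [Walk.edges_reverse, List.mem_reverse]
          intro hc
          refine hne ((hE _).1 (hedges ▸ List.mem_append_right _ ?_))
          rwa [Sym2.eq_swap] at hc
        have hC : (Walk.cons huv.symm q.reverse).IsCycle :=
          (Walk.cons_isCycle_iff _ huv.symm).2 ⟨hq_path.reverse, hnotq⟩
        have hp2 : 2 ≤ p.length := by
          refine two_le_length_of_ne p huvne fun hc => ?_
          exact hne ((hE _).1 (hedges ▸ List.mem_append_left _ hc))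
        have hClen : (Walk.cons huv.symm q.reverse).length ≤ n := by
          simp only [Walk.length_cons, Walk.length_reverse]
          omega
        refine ih v (Walk.cons huv.symm q.reverse) hClen hC a x b hab ?_ ?_ ?_
        · rw [Walk.edges_cons, List.mem_cons, Walk.edges_reverse, List.mem_reverse]
          exact Or.inr h1
        · rw [Walk.edges_cons, List.mem_cons, Walk.edges_reverse, List.mem_reverse]
          exact Or.inr h2
        · intro y hy hxy
          rw [Walk.support_cons, List.mem_cons, Walk.support_reverse, List.mem_reverse] at hy
          rcases hy with rfl | hy
          · exact hnb y hv hxy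
          · exact hnb y (hΔsub y (Or.inr hy)) hxy
    · -- triangle case
      have h3 : Γ.length = 3 := by
        have := hΓ.three_le_length; omega
      clear hlen hnb ih h4
      cases Γ with
      | nil => simp at h3
      | cons h1 w =>
        cases w with
        | nil => simp at h3
        | cons h2 w2 =>
          cases w2 with
          | nil => simp at h3
          | cons h3' w3 =>
            cases w3 with
            | cons h4' w4 => simp only [Walk.length_cons] at h3; omega
            | nil =>
              have hnd := hΓ.support_nodup
              simp only [Walk.support_cons, Walk.support_nil, List.tail_cons,
                List.nodup_cons, List.mem_cons, List.not_mem_nil, or_false,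
                List.mem_singleton, List.nodup_nil, and_true, not_or] at hnd
              simp only [Walk.edges_cons, Walk.edges_nil, List.mem_cons,
                List.not_mem_nil, or_false, Sym2.eq, Sym2.rel_iff',
                Prod.mk.injEq, Prod.swap_prod_mk] at hax hxb
              rcases hax with (⟨ha, hx⟩ | ⟨ha, hx⟩) | (⟨ha, hx⟩ | ⟨ha, hx⟩) |
                  (⟨ha, hx⟩ | ⟨ha, hx⟩) <;>
                rcases hxb with (⟨hx2, hb⟩ | ⟨hx2, hb⟩) | (⟨hx2, hb⟩ | ⟨hx2, hb⟩) |
                  (⟨hx2, hb⟩ | ⟨hx2, hb⟩) <;>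
                subst_vars <;>
                first
                  | assumption
                  | exact h1.symm
                  | exact h2.symm
                  | exact h3'.symm
                  | simp_all

theorem adj_of_consecutive_in_cycle_of_chordal {V : Type*} (G : SimpleGraph V)
    (hG : G.IsChordalGraph) {c : V} (Γ : G.Walk c c) (hΓ : Γ.IsCycle)
    (a x b : V) (hab : a ≠ b)
    (hax : s(a, x) ∈ Γ.edges) (hxb : s(x, b) ∈ Γ.edges)
    (hnb : ∀ y ∈ Γ.support, G.Adj x y → y = a ∨ y = b) :
    G.Adj a b := by
  exact aux_adj hG Γ.length c Γ le_rfl hΓ a x b hab hax hxb hnb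
end

section
/- For every connected graph G of order n ≥ 5 and every vertex x of G, the b-chromatic number of the vertex-deleted subgraph satisfies b(G) - (⌈n/2⌉ - 2) ≤ b(G - {x}) ≤ b(G) + (⌊n/2⌋ - 2). -/
namespace BCol

open Finset

variable {V : Type*} [Fintype V] [DecidableEq V]

/-- The set of k admitting a proper coloring. -/
def pSet (G : SimpleGraph V) : Set ℕ :=
  {k | ∃ c : V → Fin k, ∀ u v, G.Adj u v → c u ≠ c v}

def bSet (G : SimpleGraph V) : Set ℕ :=
  {k | ∃ c : V → Fin k, G.IsBColoring c}

lemma bChrom_eq (G : SimpleGraph V) : G.bChromaticNumber = sSup (bSet G) := rfl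

noncomputable def mchrom (G : SimpleGraph V) : ℕ := sInf (pSet G)

lemma card_mem_pSet (G : SimpleGraph V) : Fintype.card V ∈ pSet G := by
  refine ⟨Fintype.equivFin V, fun u v huv h => ?_⟩
  exact G.ne_of_adj huv ((Fintype.equivFin V).injective h)

lemma pSet_nonempty (G : SimpleGraph V) : (pSet G).Nonempty := ⟨_, card_mem_pSet G⟩

lemma mchrom_mem (G : SimpleGraph V) : mchrom G ∈ pSet G := Nat.sInf_mem (pSet_nonempty G)

lemma mchrom_le {G : SimpleGraph V} {k : ℕ} (h : k ∈ pSet G) : mchrom G ≤ k := Nat.sInf_le h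

/-- compress: an equiv from the complement of one color to `Fin (m-1)`. -/
noncomputable def compressEquiv {m : ℕ} (j : Fin m) : {i : Fin m // i ≠ j} ≃ Fin (m - 1) := by
  refine Fintype.equivFinOfCardEq ?_
  have h1 : Fintype.card {i : Fin m // ¬ (i = j)} = Fintype.card (Fin m) - Fintype.card {i : Fin m // i = j} :=
    Fintype.card_subtype_compl _
  simpa [Fintype.card_subtype_eq] using h1

lemma mchrom_pos [Nonempty V] (G : SimpleGraph V) : 0 < mchrom G := by
  rcases Nat.eq_zero_or_pos (mchrom G) with h | h
  · exfalso
    obtain ⟨c, -⟩ := mchrom_mem G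
    rw [h] at c
    exact (c (Classical.arbitrary V)).elim0
  · exact h

lemma two_le_mchrom {G : SimpleGraph V} {a b : V} (hab : G.Adj a b) : 2 ≤ mchrom G := by
  obtain ⟨c, hc⟩ := mchrom_mem G
  by_contra h
  push_neg at h
  have hs : Subsingleton (Fin (mchrom G)) := by
    have h1 : mchrom G ≤ 1 := by omega
    rcases Nat.le_one_iff_eq_zero_or_eq_one.mp h1 with h2 | h2 <;> rw [h2]
    · exact ⟨fun a => a.elim0⟩
    · infer_instance
  exact hc a b hab (Subsingleton.elim _ _)

/-- The key lemma: the minimal proper coloring count admits a b-coloring. -/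
lemma mchrom_mem_bSet [Nonempty V] (G : SimpleGraph V) : mchrom G ∈ bSet G := by
  obtain ⟨c, hc⟩ := mchrom_mem G
  by_contra hnb
  -- some color i fails the b-property
  have hnb' : ¬ G.IsBColoring c := fun h => hnb ⟨c, h⟩
  rw [SimpleGraph.IsBColoring] at hnb'
  push_neg at hnb'
  obtain ⟨i, hi⟩ := hnb' hc
  classical
  -- recolor class i
  choose f hf1 hf2 using hi
  let c1 : V → Fin (mchrom G) := fun v => if h : c v = i then f v h else c v
  have hc1proper : ∀ u v, G.Adj u v → c1 u ≠ c1 v := by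
    intro u v huv
    by_cases hu : c u = i <;> by_cases hv : c v = i
    · exact absurd (hu.trans hv.symm) (hc u v huv)
    · simp only [c1, dif_pos hu, dif_neg hv]
      intro h
      exact hf2 u hu v huv h.symm
    · simp only [c1, dif_neg hu, dif_pos hv]
      intro h
      exact hf2 v hv u huv.symm h
    · simp only [c1, dif_neg hu, dif_neg hv]
      exact hc u v huv
  have hc1ne : ∀ v, c1 v ≠ i := by
    intro v
    by_cases hv : c v = i
    · simp only [c1, dif_pos hv]; exact hf1 v hv
    · simp only [c1, dif_neg hv]; exact hv
  -- compress to m - 1 colors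
  have hm1 : mchrom G - 1 ∈ pSet G := by
    refine ⟨fun v => compressEquiv i ⟨c1 v, hc1ne v⟩, fun u v huv h => ?_⟩
    have := (compressEquiv i).injective h
    exact hc1proper u v huv (congrArg Subtype.val this)
  have := mchrom_le hm1
  have hpos : 0 < mchrom G := mchrom_pos G
  omega

lemma bSet_le_card {G : SimpleGraph V} {k : ℕ} (h : k ∈ bSet G) : k ≤ Fintype.card V := by
  obtain ⟨c, hprop, hb⟩ := h
  choose v hv hw using hb
  have : Function.Injective v := by
    intro i j hij
    rw [← hv i, ← hv j, hij]
  simpa using Fintype.card_le_of_injective v this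

lemma bSet_bddAbove (G : SimpleGraph V) : BddAbove (bSet G) :=
  ⟨Fintype.card V, fun _ h => bSet_le_card h⟩

lemma le_bChrom {G : SimpleGraph V} {k : ℕ} (h : k ∈ bSet G) : k ≤ G.bChromaticNumber :=
  le_csSup (bSet_bddAbove G) h

lemma bChrom_mem [Nonempty V] (G : SimpleGraph V) : G.bChromaticNumber ∈ bSet G :=
  Nat.sSup_mem ⟨_, mchrom_mem_bSet G⟩ (bSet_bddAbove G)

lemma mchrom_le_bChrom [Nonempty V] (G : SimpleGraph V) : mchrom G ≤ G.bChromaticNumber :=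
  le_bChrom (mchrom_mem_bSet G)

end BCol

namespace Stage2
open Finset
variable {V : Type*} [Fintype V] [DecidableEq V]

lemma mchrom_induce_le (G : SimpleGraph V) (s : Set V) [DecidablePred (· ∈ s)] :
    BCol.mchrom (G.induce s) ≤ BCol.mchrom G := by
  obtain ⟨c, hc⟩ := BCol.mchrom_mem G
  exact BCol.mchrom_le ⟨fun v => c v.val, fun u v huv => hc u.val v.val huv⟩

/-- a clique avoiding x gives a lower bound for mchrom of the vertex-deleted graph -/
lemma clique_le_mchrom_induce (G : SimpleGraph V) (x : V) (T : Finset V) (hxT : x ∉ T)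
    (hT : ∀ a ∈ T, ∀ b ∈ T, a ≠ b → G.Adj a b) :
    T.card ≤ BCol.mchrom (G.induce ({x}ᶜ : Set V)) := by
  obtain ⟨c, hc⟩ := BCol.mchrom_mem (G.induce ({x}ᶜ : Set V))
  classical
  have hmem : ∀ a ∈ T, a ∈ ({x}ᶜ : Set V) := by
    intro a ha
    simp only [Set.mem_compl_iff, Set.mem_singleton_iff]
    rintro rfl; exact hxT ha
  rcases T.eq_empty_or_nonempty with rfl | ⟨a0, ha0⟩
  · simp
  haveI : Nonempty ({x}ᶜ : Set V) := ⟨⟨a0, hmem a0 ha0⟩⟩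
  haveI : Nonempty (Fin (BCol.mchrom (G.induce ({x}ᶜ : Set V)))) :=
    ⟨⟨0, BCol.mchrom_pos _⟩⟩
  -- map T into Fin (mchrom) injectively
  have hinj : Set.InjOn (fun a => if h : a ∈ T then c ⟨a, hmem a h⟩ else Classical.arbitrary _) T := by
    intro a ha b hb hab
    have ha' : a ∈ T := Finset.mem_coe.mp ha
    have hb' : b ∈ T := Finset.mem_coe.mp hb
    by_contra hne
    have hadj : (G.induce ({x}ᶜ : Set V)).Adj ⟨a, hmem a ha'⟩ ⟨b, hmem b hb'⟩ := by
      simp only [SimpleGraph.comap_adj, Function.Embedding.coe_subtype]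
      exact hT a ha' b hb' hne
    apply hc _ _ hadj
    simp only [] at hab
    rw [dif_pos ha', dif_pos hb'] at hab
    exact hab
  calc T.card ≤ (univ : Finset (Fin (BCol.mchrom (G.induce ({x}ᶜ : Set V))))).card := by
        apply Finset.card_le_card_of_injOn _ (fun a _ => mem_univ _)
        exact fun a ha b hb h => hinj (by simpa using ha) (by simpa using hb) h
    _ = _ := by simp

lemma clique_le_mchrom (G : SimpleGraph V) (T : Finset V)
    (hT : ∀ a ∈ T, ∀ b ∈ T, a ≠ b → G.Adj a b) :
    T.card ≤ BCol.mchrom G := by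
  obtain ⟨c, hc⟩ := BCol.mchrom_mem G
  have hinj : Set.InjOn c T := by
    intro a ha b hb hab
    by_contra hne
    exact hc a b (hT a (by simpa using ha) b (by simpa using hb) hne) hab
  calc T.card ≤ (univ : Finset (Fin (BCol.mchrom G))).card :=
        Finset.card_le_card_of_injOn c (fun a _ => mem_univ _) hinj
    _ = _ := by simp

lemma card_compl_singleton (x : V) :
    Fintype.card ({x}ᶜ : Set V) = Fintype.card V - 1 := by
  classical
  have e : ({x}ᶜ : Set V) ≃ {v : V // ¬ (v = x)} :=
    Equiv.subtypeEquivRight (by intro v; simp)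
  rw [Fintype.card_congr e, Fintype.card_subtype_compl, Fintype.card_subtype_eq]

/-- counting lemma: b-coloring with k colors: there is a set P of "singleton colors" whose
representatives form a clique, with 2k ≤ card + |P|. -/
lemma counting {W : Type*} [Fintype W] [DecidableEq W] (F : SimpleGraph W) {k : ℕ}
    (c : W → Fin k) (hc : F.IsBColoring c) :
    ∃ (P : Finset (Fin k)) (r : Fin k → W),
      (∀ i, c (r i) = i) ∧
      (∀ i, ∀ j, j ≠ i → ∃ w, F.Adj (r i) w ∧ c w = j) ∧
      (∀ i ∈ P, ∀ w, c w = i → w = r i) ∧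
      2 * k ≤ Fintype.card W + P.card ∧
      (∀ i0, i0 ∉ P → (univ.filter (fun w => c w = i0)).card + 2 * k ≤ Fintype.card W + P.card + 2) := by
  classical
  obtain ⟨hprop, hb⟩ := hc
  choose r hr hw using hb
  set P := univ.filter (fun i : Fin k => ∀ w, c w = i → w = r i) with hP
  have hcard : Fintype.card W = ∑ i : Fin k, (univ.filter (fun w => c w = i)).card := by
    rw [← Finset.card_univ]
    exact Finset.card_eq_sum_card_fiberwise (fun w _ => mem_univ (c w))
  have hbound : ∀ i : Fin k, (if i ∈ P then 1 else 2) ≤ (univ.filter (fun w => c w = i)).card := by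
    intro i
    by_cases hiP : i ∈ P
    · simp only [if_pos hiP]
      exact Finset.card_pos.mpr ⟨r i, by simp [hr i]⟩
    · simp only [if_neg hiP]
      have : ∃ w, c w = i ∧ w ≠ r i := by
        by_contra hco
        push_neg at hco
        exact hiP (mem_filter.mpr ⟨mem_univ _, fun w hw2 => hco w hw2⟩)
      obtain ⟨w, hw1, hw2⟩ := this
      refine Finset.one_lt_card.mpr ⟨w, by simp [hw1], r i, by simp [hr i], hw2⟩
  have hPle : P.card ≤ k := by simpa using Finset.card_le_card (Finset.subset_univ P)
  have hsum2 : ∑ i : Fin k, (if i ∈ P then 1 else 2) = 2 * k - P.card := by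
    rw [Finset.sum_ite, Finset.sum_const, Finset.sum_const]
    have e1 : univ.filter (fun i => i ∈ P) = P := by
      ext i; simp
    have e2 : univ.filter (fun i => i ∉ P) = univ \ P := by
      ext i; simp
    have e3 : (univ \ P).card = k - P.card := by
      rw [Finset.card_sdiff_of_subset (Finset.subset_univ P)]
      simp
    rw [e1, e2, e3]
    simp only [smul_eq_mul, mul_one, mul_two]
    omega
  have hsum : ∑ i : Fin k, (if i ∈ P then 1 else 2) ≤ ∑ i : Fin k, (univ.filter (fun w => c w = i)).card :=
    Finset.sum_le_sum (fun i _ => hbound i)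
  refine ⟨P, r, hr, hw, ?_, by omega, ?_⟩
  · intro i hi w hwi
    exact (mem_filter.mp hi).2 w hwi
  · intro i0 hi0
    have hsplit : ∑ i : Fin k, (univ.filter (fun w => c w = i)).card
        = (univ.filter (fun w => c w = i0)).card + ∑ i ∈ univ.erase i0, (univ.filter (fun w => c w = i)).card :=
      (Finset.add_sum_erase univ _ (mem_univ i0)).symm
    have hsplit2 : ∑ i : Fin k, (if i ∈ P then 1 else 2)
        = (if i0 ∈ P then 1 else 2) + ∑ i ∈ univ.erase i0, (if i ∈ P then 1 else 2) :=
      (Finset.add_sum_erase univ _ (mem_univ i0)).symm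
    have hsum3 : ∑ i ∈ univ.erase i0, (if i ∈ P then 1 else 2) ≤
        ∑ i ∈ univ.erase i0, (univ.filter (fun w => c w = i)).card :=
      Finset.sum_le_sum (fun i _ => hbound i)
    rw [if_neg hi0] at hsplit2
    omega

/-- singleton representatives are pairwise adjacent -/
lemma singleton_clique {W : Type*} [Fintype W] [DecidableEq W] (F : SimpleGraph W) {k : ℕ}
    (c : W → Fin k) (P : Finset (Fin k)) (r : Fin k → W)
    (hr : ∀ i, c (r i) = i)
    (hw : ∀ i, ∀ j, j ≠ i → ∃ w, F.Adj (r i) w ∧ c w = j)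
    (hsing : ∀ i ∈ P, ∀ w, c w = i → w = r i) :
    ∀ i ∈ P, ∀ j ∈ P, i ≠ j → F.Adj (r i) (r j) := by
  intro i hi j hj hij
  obtain ⟨w, hadj, hcw⟩ := hw i j (Ne.symm hij)
  rwa [hsing j hj w hcw] at hadj

end Stage2

namespace Stage3
open Finset
variable {V : Type*} [Fintype V] [DecidableEq V]

lemma star_bound (G : SimpleGraph V) (x : V)
    (hedge : ∀ a b : V, a ≠ x → b ≠ x → ¬ G.Adj a b)
    {k : ℕ} (hk : k ∈ BCol.bSet G) : k ≤ 2 := by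
  by_contra h
  push_neg at h
  obtain ⟨c, hprop, hb⟩ := hk
  -- pick a color different from c x
  have h3 : 3 ≤ k := h
  have hcx : ((univ : Finset (Fin k)).erase (c x)).Nonempty := by
    apply Finset.card_pos.mp
    rw [Finset.card_erase_of_mem (mem_univ _)]
    simp only [card_univ, Fintype.card_fin]
    omega
  obtain ⟨i, hi⟩ := hcx
  have hine : i ≠ c x := Finset.ne_of_mem_erase hi
  obtain ⟨v, hvc, hvw⟩ := hb i
  have hvx : v ≠ x := fun hvx => hine (hvx ▸ hvc ▸ rfl)
  -- two distinct colors ≠ i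
  have h2 : 1 < ((univ : Finset (Fin k)).erase i).card := by
    rw [Finset.card_erase_of_mem (mem_univ _)]
    simp only [card_univ, Fintype.card_fin]
    omega
  obtain ⟨j1, hj1, j2, hj2, hj12⟩ := Finset.one_lt_card.mp h2
  obtain ⟨w1, hw1a, hw1c⟩ := hvw j1 (Finset.ne_of_mem_erase hj1)
  obtain ⟨w2, hw2a, hw2c⟩ := hvw j2 (Finset.ne_of_mem_erase hj2)
  have hw1x : w1 = x := by
    by_contra hne
    exact hedge v w1 hvx hne hw1a
  have hw2x : w2 = x := by
    by_contra hne
    exact hedge v w2 hvx hne hw2a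
  apply hj12
  rw [← hw1c, ← hw2c, hw1x, hw2x]

lemma exists_adj_of_connected (G : SimpleGraph V) (hconn : G.Connected)
    {a b : V} (hab : a ≠ b) : ∃ u v : V, G.Adj u v := by
  obtain ⟨p⟩ := hconn.preconnected a b
  cases p with
  | nil => exact absurd rfl hab
  | cons h q => exact ⟨_, _, h⟩

lemma fin2_ne_iff {a b t : Fin 2} (hab : a ≠ b) : t ≠ b ↔ t = a := by
  revert a b t hab; decide

lemma bipartite_bound {W : Type*} [Fintype W] [DecidableEq W] (F : SimpleGraph W) {k : ℕ}
    (c : W → Fin k) (hc : F.IsBColoring c) (p : W → Fin 2)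
    (hp : ∀ u v, F.Adj u v → p u ≠ p v) (hk : 3 ≤ k) :
    2 * k ≤ Fintype.card W + 1 := by
  classical
  obtain ⟨hprop, hb⟩ := hc
  choose v hvc hvw using hb
  choose wf hwadj hwc using hvw
  -- the opposite side of each b-vertex has at least k-1 vertices
  have factA : ∀ i : Fin k, k - 1 ≤ (univ.filter (fun w => p w ≠ p (v i))).card := by
    intro i
    have : ((univ : Finset (Fin k)).erase i).card ≤ (univ.filter (fun w => p w ≠ p (v i))).card := by
      apply Finset.card_le_card_of_injOn (fun j => if h : j ≠ i then wf i j h else v i)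
      · intro j hj
        have hji : j ≠ i := Finset.ne_of_mem_erase hj
        simp only [mem_coe, dif_pos hji]
        simp only [mem_filter, mem_univ, true_and]
        exact (hp _ _ (hwadj i j hji)).symm
      · intro j1 hj1 j2 hj2 heq
        have h1 : j1 ≠ i := Finset.ne_of_mem_erase (Finset.mem_coe.mp hj1)
        have h2 : j2 ≠ i := Finset.ne_of_mem_erase (Finset.mem_coe.mp hj2)
        simp only [] at heq
        rw [dif_pos h1, dif_pos h2] at heq
        have := congrArg c heq
        rwa [hwc i j1 h1, hwc i j2 h2] at this
    rwa [Finset.card_erase_of_mem (mem_univ _), card_univ, Fintype.card_fin] at this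
  -- key claim: some side contains k colors and hence k vertices
  have main : ∃ s : Fin 2, k ≤ (univ.filter (fun w => p w = s)).card ∧
      k - 1 ≤ (univ.filter (fun w => p w ≠ s)).card := by
    by_cases hsame : ∀ i j : Fin k, p (v i) = p (v j)
    · -- all b-vertices on one side
      have h0 : (0 : ℕ) < k := by omega
      let i0 : Fin k := ⟨0, h0⟩
      refine ⟨p (v i0), ?_, ?_⟩
      · have : (univ : Finset (Fin k)).card ≤ (univ.filter (fun w => p w = p (v i0))).card := by
          apply Finset.card_le_card_of_injOn v
          · intro j _
            simp only [mem_coe, mem_filter, mem_univ, true_and]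
            exact hsame j i0
          · intro j1 _ j2 _ heq
            have := congrArg c heq
            rwa [hvc, hvc] at this
        simpa using this
      · exact factA i0
    · push_neg at hsame
      obtain ⟨i, j, hij⟩ := hsame
      -- if color i appears on the opposite side of v i, that side has k colors
      by_cases hiopp : ∃ w, p w ≠ p (v i) ∧ c w = i
      · obtain ⟨w0, hw0p, hw0c⟩ := hiopp
        refine ⟨p (v j), ?_, ?_⟩
        · -- side of v j = opposite side of v i
          have hside : ∀ t : Fin 2, (t = p (v j)) ↔ (t ≠ p (v i)) := by
            intro t
            constructor
            · intro ht; rw [ht]; exact Ne.symm hij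
            · intro ht; exact (fin2_ne_iff (Ne.symm hij)).mp ht
          have : (univ : Finset (Fin k)).card ≤ (univ.filter (fun w => p w = p (v j))).card := by
            apply Finset.card_le_card_of_injOn (fun l => if h : l ≠ i then wf i l h else w0)
            · intro l _
              simp only [mem_coe, mem_filter, mem_univ, true_and]
              by_cases hl : l ≠ i
              · rw [dif_pos hl]
                exact (hside _).mpr (hp _ _ (hwadj i l hl)).symm
              · rw [dif_neg hl]
                exact (hside _).mpr hw0p
            · intro l1 _ l2 _ heq
              have hcl : ∀ l (h : ¬ l ≠ i), c (if h : l ≠ i then wf i l h else w0) = l := by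
                intro l h
                rw [dif_neg h]
                push_neg at h
                rw [hw0c, h]
              have hcl2 : ∀ l, c (if h : l ≠ i then wf i l h else w0) = l := by
                intro l
                by_cases h : l ≠ i
                · rw [dif_pos h]; exact hwc i l h
                · exact hcl l h
              simp only [] at heq
              have := congrArg c heq
              rwa [hcl2, hcl2] at this
          simpa using this
        · exact factA j
      · -- symmetric / third-color argument
        by_cases hjopp : ∃ w, p w ≠ p (v j) ∧ c w = j
        · obtain ⟨w0, hw0p, hw0c⟩ := hjopp
          refine ⟨p (v i), ?_, ?_⟩
          · have hside : ∀ t : Fin 2, (t = p (v i)) ↔ (t ≠ p (v j)) := by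
              intro t
              constructor
              · intro ht; rw [ht]; exact hij
              · intro ht; exact (fin2_ne_iff hij).mp ht
            have : (univ : Finset (Fin k)).card ≤ (univ.filter (fun w => p w = p (v i))).card := by
              apply Finset.card_le_card_of_injOn (fun l => if h : l ≠ j then wf j l h else w0)
              · intro l _
                simp only [mem_coe, mem_filter, mem_univ, true_and]
                by_cases hl : l ≠ j
                · rw [dif_pos hl]
                  exact (hside _).mpr (hp _ _ (hwadj j l hl)).symm
                · rw [dif_neg hl]
                  exact (hside _).mpr hw0p
              · intro l1 _ l2 _ heq
                have hcl2 : ∀ l, c (if h : l ≠ j then wf j l h else w0) = l := by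
                  intro l
                  by_cases h : l ≠ j
                  · rw [dif_pos h]; exact hwc j l h
                  · rw [dif_neg h]; push_neg at h; rw [hw0c, h]
                simp only [] at heq
                have := congrArg c heq
                rwa [hcl2, hcl2] at this
            simpa using this
          · exact factA i
        · -- neither: pick a third color l and derive a contradiction
          exfalso
          have hex : ∃ l : Fin k, l ≠ i ∧ l ≠ j := by
            by_contra hco
            push_neg at hco
            have hsub : (univ : Finset (Fin k)) ⊆ {i, j} := by
              intro l _
              simp only [Finset.mem_insert, Finset.mem_singleton]
              by_cases h : l = i
              · exact Or.inl h
              · exact Or.inr (hco l h)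
            have h1 := Finset.card_le_card hsub
            have h2 : ({i, j} : Finset (Fin k)).card ≤ 2 :=
              (Finset.card_insert_le _ _).trans (by simp)
            simp only [card_univ, Fintype.card_fin] at h1
            omega
          obtain ⟨l, hli, hlj⟩ := hex
          by_cases hpl : p (v l) = p (v i)
          · refine hiopp ⟨wf l i (Ne.symm hli), ?_, hwc l i (Ne.symm hli)⟩
            rw [← hpl]
            exact (hp _ _ (hwadj l i (Ne.symm hli))).symm
          · have hplj : p (v l) = p (v j) := (fin2_ne_iff (Ne.symm hij)).mp hpl
            refine hjopp ⟨wf l j (Ne.symm hlj), ?_, hwc l j (Ne.symm hlj)⟩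
            rw [← hplj]
            exact (hp _ _ (hwadj l j (Ne.symm hlj))).symm
  obtain ⟨s, hs1, hs2⟩ := main
  have htotal : (univ.filter (fun w => p w = s)).card + (univ.filter (fun w => p w ≠ s)).card = Fintype.card W := by
    rw [← Finset.card_univ]
    exact Finset.card_filter_add_card_filter_not _
  omega

end Stage3

namespace Stage4
open Finset
variable {V : Type*} [Fintype V] [DecidableEq V]

lemma mem_compl_of_ne {x w : V} (h : w ≠ x) : w ∈ ({x}ᶜ : Set V) := by
  simp [h]

lemma ne_of_mem_compl {x : V} (w : ({x}ᶜ : Set V)) : (w : V) ≠ x := by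
  have h := w.2
  simp only [Set.mem_compl_iff, Set.mem_singleton_iff] at h
  exact h

/-- Branch I: if no classmate of x is "stuck", we can delete x's color and keep k-1 colors. -/
lemma branchI (G : SimpleGraph V) (x : V) {k : ℕ} (c : V → Fin k) (hc : G.IsBColoring c)
    (hns : ∀ z : V, z ≠ x → c z = c x →
      ∃ μ : Fin k, μ ≠ c x ∧ ∀ w, w ≠ x → ¬(G.Adj z w ∧ c w = μ)) :
    k - 1 ∈ BCol.bSet (G.induce ({x}ᶜ : Set V)) := by
  classical
  obtain ⟨hprop, hb⟩ := hc
  choose μf hμ1 hμ2 using hns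
  -- intermediate coloring into the subtype
  let c' : ({x}ᶜ : Set V) → {i : Fin k // i ≠ (c x)} := fun v =>
    if h : c v.1 = (c x) then ⟨μf v.1 (ne_of_mem_compl v) h, hμ1 v.1 (ne_of_mem_compl v) h⟩
    else ⟨c v.1, h⟩
  have hc'val : ∀ v : ({x}ᶜ : Set V), c v.1 ≠ (c x) → (c' v : Fin k) = c v.1 := by
    intro v h
    simp only [c', dif_neg h]
  -- the final coloring
  let e := BCol.compressEquiv (c x)
  refine ⟨fun v => e (c' v), ?_, ?_⟩
  · -- proper
    intro u v hadj
    have hGadj : G.Adj u.1 v.1 := hadj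
    intro hne
    have hcc : c' u = c' v := e.injective hne
    by_cases hu : c u.1 = (c x) <;> by_cases hv : c v.1 = (c x)
    · exact hprop u.1 v.1 hGadj (hu.trans hv.symm)
    · have h1 : (c' u : Fin k) = μf u.1 (ne_of_mem_compl u) hu := by simp only [c', dif_pos hu]
      have h2 : (c' v : Fin k) = c v.1 := hc'val v hv
      have : μf u.1 (ne_of_mem_compl u) hu = c v.1 := by
        rw [← h1, ← h2, hcc]
      exact hμ2 u.1 (ne_of_mem_compl u) hu v.1 (ne_of_mem_compl v) ⟨hGadj, this.symm⟩
    · have h1 : (c' u : Fin k) = c u.1 := hc'val u hu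
      have h2 : (c' v : Fin k) = μf v.1 (ne_of_mem_compl v) hv := by simp only [c', dif_pos hv]
      have : μf v.1 (ne_of_mem_compl v) hv = c u.1 := by
        rw [← h1, ← h2, hcc]
      exact hμ2 v.1 (ne_of_mem_compl v) hv u.1 (ne_of_mem_compl u) ⟨hGadj.symm, this.symm⟩
    · have h1 : (c' u : Fin k) = c u.1 := hc'val u hu
      have h2 : (c' v : Fin k) = c v.1 := hc'val v hv
      exact hprop u.1 v.1 hGadj (by rw [← h1, ← h2, hcc])
  · -- b-vertices
    intro i'
    set a := e.symm i' with ha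
    obtain ⟨vj, hvjc, hvjw⟩ := hb a.1
    have hvjx : vj ≠ x := by
      intro h
      apply a.2
      rw [← hvjc, h]
    refine ⟨⟨vj, mem_compl_of_ne hvjx⟩, ?_, ?_⟩
    · show e (c' ⟨vj, mem_compl_of_ne hvjx⟩) = i'
      have : c' ⟨vj, mem_compl_of_ne hvjx⟩ = a := by
        apply Subtype.ext
        rw [hc'val _ (by rw [hvjc]; exact a.2)]
        exact hvjc
      rw [this, ha, e.apply_symm_apply]
    · intro l' hl'
      set bsub := e.symm l' with hbsub
      have hba : bsub.1 ≠ a.1 := by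
        intro h
        apply hl'
        have : bsub = a := Subtype.ext h
        rw [← e.apply_symm_apply l', ← e.apply_symm_apply i', ← hbsub, ← ha, this]
      obtain ⟨w, hwadj, hwc⟩ := hvjw bsub.1 hba
      have hwx : w ≠ x := by
        intro h
        apply bsub.2
        rw [← hwc, h]
      refine ⟨⟨w, mem_compl_of_ne hwx⟩, hwadj, ?_⟩
      show e (c' ⟨w, mem_compl_of_ne hwx⟩) = l'
      have : c' ⟨w, mem_compl_of_ne hwx⟩ = bsub := by
        apply Subtype.ext
        rw [hc'val _ (by rw [hwc]; exact bsub.2)]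
        exact hwc
      rw [this, hbsub, e.apply_symm_apply]

end Stage4

namespace Stage5
open Finset
variable {V : Type*} [Fintype V] [DecidableEq V]

lemma upper_bound (G : SimpleGraph V) (hconn : G.Connected) {n : ℕ} (hn : Fintype.card V = n)
    (hn5 : 5 ≤ n) (x : V) :
    (G.induce ({x}ᶜ : Set V)).bChromaticNumber + 2 ≤ G.bChromaticNumber + n / 2 := by
  classical
  haveI hNV : Nonempty V := Fintype.card_pos_iff.mp (by omega)
  have hcardH : Fintype.card ({x}ᶜ : Set V) = n - 1 := by
    rw [Stage2.card_compl_singleton, hn]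
  haveI hNH : Nonempty ({x}ᶜ : Set V) := Fintype.card_pos_iff.mp (by omega)
  obtain ⟨a0, b0, hne0⟩ : ∃ a b : V, a ≠ b := Fintype.exists_pair_of_one_lt_card (by omega)
  obtain ⟨u0, v0, hadj0⟩ := Stage3.exists_adj_of_connected G hconn hne0
  have hb2 : 2 ≤ G.bChromaticNumber :=
    le_trans (BCol.two_le_mchrom hadj0) (BCol.mchrom_le_bChrom G)
  have hkH : (G.induce ({x}ᶜ : Set V)).bChromaticNumber ∈ BCol.bSet (G.induce ({x}ᶜ : Set V)) :=
    BCol.bChrom_mem _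
  set kH := (G.induce ({x}ᶜ : Set V)).bChromaticNumber with hkHdef
  by_cases hksmall : kH ≤ n / 2
  · omega
  have hk3 : 3 ≤ kH := by omega
  obtain ⟨cH, hcHb⟩ := hkH
  obtain ⟨P, r, hr, hw, hsing, hcount, -⟩ := Stage2.counting (G.induce ({x}ᶜ : Set V)) cH hcHb
  rw [hcardH] at hcount
  have hclique := Stage2.singleton_clique (G.induce ({x}ᶜ : Set V)) cH P r hr hw hsing
  -- singleton reps form a clique in G
  have hsm : P.card ≤ BCol.mchrom G := by
    have hTcard : (P.image (fun i => ((r i : ({x}ᶜ : Set V)) : V))).card = P.card := by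
      apply Finset.card_image_of_injOn
      intro i hi j hj hij
      have hrij : r i = r j := Subtype.ext hij
      rw [← hr i, ← hr j, hrij]
    have hTadj : ∀ a ∈ P.image (fun i => ((r i : ({x}ᶜ : Set V)) : V)),
        ∀ b ∈ P.image (fun i => ((r i : ({x}ᶜ : Set V)) : V)), a ≠ b → G.Adj a b := by
      intro a ha b hb hab
      obtain ⟨i, hi, rfl⟩ := Finset.mem_image.mp ha
      obtain ⟨j, hj, rfl⟩ := Finset.mem_image.mp hb
      have hij : i ≠ j := by rintro rfl; exact hab rfl
      exact hclique i hi j hj hij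
    calc P.card = _ := hTcard.symm
      _ ≤ _ := Stage2.clique_le_mchrom G _ hTadj
  have hsb : P.card ≤ G.bChromaticNumber := le_trans hsm (BCol.mchrom_le_bChrom G)
  by_cases hb3 : 3 ≤ G.bChromaticNumber
  · omega
  · -- b(G) = 2, so G (hence G - x) is 2-colorable
    have hm2 : BCol.mchrom G = 2 := by
      have h1 := BCol.mchrom_le_bChrom G
      have h2 := BCol.two_le_mchrom hadj0
      omega
    obtain ⟨c2, hc2⟩ := BCol.mchrom_mem G
    have hp : ∀ u v, G.Adj u v → (Fin.cast hm2 (c2 u)) ≠ (Fin.cast hm2 (c2 v)) := by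
      intro u v huv h
      exact hc2 u v huv (Fin.cast_injective hm2 h)
    have hbip := Stage3.bipartite_bound (G.induce ({x}ᶜ : Set V)) cH hcHb
      (fun w => Fin.cast hm2 (c2 w.1)) (fun u v huv => hp u.1 v.1 huv) hk3
    rw [hcardH] at hbip
    omega

lemma lower_bound (G : SimpleGraph V) {n : ℕ} (hn : Fintype.card V = n)
    (hn5 : 5 ≤ n) (x : V) :
    G.bChromaticNumber + 2 ≤ (G.induce ({x}ᶜ : Set V)).bChromaticNumber + (n + 1) / 2 := by
  classical
  haveI hNV : Nonempty V := Fintype.card_pos_iff.mp (by omega)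
  have hcardH : Fintype.card ({x}ᶜ : Set V) = n - 1 := by
    rw [Stage2.card_compl_singleton, hn]
  haveI hNH : Nonempty ({x}ᶜ : Set V) := Fintype.card_pos_iff.mp (by omega)
  have hmbH : BCol.mchrom (G.induce ({x}ᶜ : Set V)) ≤ (G.induce ({x}ᶜ : Set V)).bChromaticNumber :=
    BCol.mchrom_le_bChrom _
  have hmH1 : 1 ≤ BCol.mchrom (G.induce ({x}ᶜ : Set V)) := BCol.mchrom_pos _
  have hk : G.bChromaticNumber ∈ BCol.bSet G := BCol.bChrom_mem G
  set k := G.bChromaticNumber with hkdef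
  by_cases hk1 : k + 1 ≤ (n + 1) / 2
  · omega
  by_cases hk2 : k ≤ (n + 1) / 2
  · -- k = (n+1)/2 ≥ 3 : enough that G - x has an edge
    by_cases hedge : ∃ a b : V, a ≠ x ∧ b ≠ x ∧ G.Adj a b
    · obtain ⟨a, b, hax, hbx, hab⟩ := hedge
      have hadjH : (G.induce ({x}ᶜ : Set V)).Adj ⟨a, Stage4.mem_compl_of_ne hax⟩
          ⟨b, Stage4.mem_compl_of_ne hbx⟩ := hab
      have := BCol.two_le_mchrom hadjH
      omega
    · push_neg at hedge
      have hstar : ∀ a b : V, a ≠ x → b ≠ x → ¬ G.Adj a b := fun a b ha hb =>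
        hedge a b ha hb
      have := Stage3.star_bound G x hstar hk
      omega
  -- now k ≥ (n+1)/2 + 1
  push_neg at hk1 hk2
  obtain ⟨c, hcb⟩ := hk
  by_cases hstuck : ∃ z, z ≠ x ∧ c z = c x ∧
      ∀ μ : Fin k, μ ≠ c x → ∃ w, w ≠ x ∧ G.Adj z w ∧ c w = μ
  · -- branch II
    obtain ⟨z, hzx, hzc, hzw⟩ := hstuck
    obtain ⟨P, r, hr, hw, hsing, hcount, hfib⟩ := Stage2.counting G c hcb
    rw [hn] at hcount hfib
    have hcxP : c x ∉ P := by
      intro h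
      have h1 := hsing _ h x rfl
      have h2 := hsing _ h z hzc
      exact hzx (h2.trans h1.symm)
    have hrx : ∀ i ∈ P, r i ≠ x := by
      intro i hi h
      apply hcxP
      have : c (r i) = i := hr i
      rw [h] at this
      rw [← this] at hi
      exact hi
    have hclique := Stage2.singleton_clique G c P r hr hw hsing
    -- clique avoiding x
    have hmh : P.card ≤ BCol.mchrom (G.induce ({x}ᶜ : Set V)) := by
      have hTcard : (P.image r).card = P.card := by
        apply Finset.card_image_of_injOn
        intro i hi j hj hij
        rw [← hr i, ← hr j, hij]
      have hxT : x ∉ P.image r := by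
        intro h
        obtain ⟨i, hi, hri⟩ := Finset.mem_image.mp h
        exact hrx i hi hri
      have hTadj : ∀ a ∈ P.image r, ∀ b ∈ P.image r, a ≠ b → G.Adj a b := by
        intro a ha b hb hab
        obtain ⟨i, hi, rfl⟩ := Finset.mem_image.mp ha
        obtain ⟨j, hj, rfl⟩ := Finset.mem_image.mp hb
        have hij : i ≠ j := by rintro rfl; exact hab rfl
        exact hclique i hi j hj hij
      calc P.card = _ := hTcard.symm
        _ ≤ _ := Stage2.clique_le_mchrom_induce G x _ hxT hTadj
    by_cases hs2 : P.card ≤ 2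
    · -- tight case: class of x is {x, z}, singleton reps + z form a triangle
      have hfibx := hfib (c x) hcxP
      have hfib2 : 2 ≤ (univ.filter (fun w => c w = c x)).card := by
        refine Finset.one_lt_card.mpr ⟨z, by simp [hzc], x, by simp, hzx⟩
      -- forces: n even, k = n/2+1, P.card = 2, fiber = exactly {x, z}
      have hfibeq : (univ.filter (fun w => c w = c x)) = {z, x} := by
        apply (Finset.eq_of_subset_of_card_le ?_ ?_).symm
        · intro w hwmem
          simp only [Finset.mem_insert, Finset.mem_singleton] at hwmem
          rcases hwmem with rfl | rfl
          · simp [hzc]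
          · simp
        · have hc2 : ({z, x} : Finset V).card = 2 := by
            rw [Finset.card_insert_of_notMem (by simp [hzx]), Finset.card_singleton]
          omega
      have hfibset : ∀ w, c w = c x → w = z ∨ w = x := by
        intro w hwc
        have : w ∈ univ.filter (fun w => c w = c x) := by simp [hwc]
        rw [hfibeq] at this
        simpa using this
      -- the two singleton colors
      have hP2 : P.card = 2 := by omega
      obtain ⟨i1, i2, hne12, hPeq⟩ := Finset.card_eq_two.mp hP2
      have hi1 : i1 ∈ P := by rw [hPeq]; simp
      have hi2 : i2 ∈ P := by rw [hPeq]; simp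
      have hne1x : i1 ≠ c x := fun h => hcxP (h ▸ hi1)
      have hne2x : i2 ≠ c x := fun h => hcxP (h ▸ hi2)
      -- r i1 adjacent to z
      have hadj1 : G.Adj (r i1) z := by
        obtain ⟨w, hwa, hwc⟩ := hw i1 (c x) hne1x.symm
        rcases hfibset w hwc with rfl | rfl
        · exact hwa
        · obtain ⟨w', hw'x, hw'a, hw'c⟩ := hzw i1 hne1x
          have : w' = r i1 := hsing i1 hi1 w' hw'c
          rw [this] at hw'a
          exact hw'a.symm
      have hadj2 : G.Adj (r i2) z := by
        obtain ⟨w, hwa, hwc⟩ := hw i2 (c x) hne2x.symm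
        rcases hfibset w hwc with rfl | rfl
        · exact hwa
        · obtain ⟨w', hw'x, hw'a, hw'c⟩ := hzw i2 hne2x
          have : w' = r i2 := hsing i2 hi2 w' hw'c
          rw [this] at hw'a
          exact hw'a.symm
      -- triangle {r i1, r i2, z}
      have hu1z : r i1 ≠ z := by
        intro h
        apply hne1x
        rw [← hr i1, h, hzc]
      have hu2z : r i2 ≠ z := by
        intro h
        apply hne2x
        rw [← hr i2, h, hzc]
      have hu12 : r i1 ≠ r i2 := by
        intro h
        apply hne12
        rw [← hr i1, ← hr i2, h]
      have hT3card : ({r i1, r i2, z} : Finset V).card = 3 := by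
        rw [Finset.card_insert_of_notMem (by simp [hu12, hu1z]),
          Finset.card_insert_of_notMem (by simp [hu2z]), Finset.card_singleton]
      have hxT3 : x ∉ ({r i1, r i2, z} : Finset V) := by
        simp only [Finset.mem_insert, Finset.mem_singleton]
        push_neg
        exact ⟨fun h => hrx i1 hi1 h.symm, fun h => hrx i2 hi2 h.symm, fun h => hzx h.symm⟩
      have hT3adj : ∀ a ∈ ({r i1, r i2, z} : Finset V), ∀ b ∈ ({r i1, r i2, z} : Finset V),
          a ≠ b → G.Adj a b := by
        intro a ha b hb hab
        simp only [Finset.mem_insert, Finset.mem_singleton] at ha hb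
        rcases ha with rfl | rfl | rfl <;> rcases hb with rfl | rfl | rfl
        · exact absurd rfl hab
        · exact hclique i1 hi1 i2 hi2 (by intro h; exact hab (by rw [h]))
        · exact hadj1
        · exact hclique i2 hi2 i1 hi1 (by intro h; exact hab (by rw [h]))
        · exact absurd rfl hab
        · exact hadj2
        · exact hadj1.symm
        · exact hadj2.symm
        · exact absurd rfl hab
      have h3 : 3 ≤ BCol.mchrom (G.induce ({x}ᶜ : Set V)) := by
        have := Stage2.clique_le_mchrom_induce G x _ hxT3 hT3adj
        rwa [hT3card] at this
      omega
    · -- P.card ≥ 3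
      omega
  · -- branch I: no stuck classmate of x
    push_neg at hstuck
    have hns : ∀ z : V, z ≠ x → c z = c x →
        ∃ μ : Fin k, μ ≠ c x ∧ ∀ w, w ≠ x → ¬(G.Adj z w ∧ c w = μ) := by
      intro z hz hcz
      obtain ⟨μ, hμ1, hμ2⟩ := hstuck z hz hcz
      exact ⟨μ, hμ1, fun w hwx hand => hμ2 w hwx hand.1 hand.2⟩
    have hk1m := Stage4.branchI G x c hcb hns
    have := BCol.le_bChrom hk1m
    omega

end Stage5

theorem bChromaticNumber_deleteVert_bounds {V : Type*} [Fintype V] [DecidableEq V]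
    (G : SimpleGraph V) (hconn : G.Connected) {n : ℕ} (hn : Fintype.card V = n)
    (hn5 : 5 ≤ n) (x : V) :
    (G.bChromaticNumber : ℤ) - ((n + 1) / 2 - 2) ≤ (G.induce ({x}ᶜ : Set V)).bChromaticNumber ∧
      ((G.induce ({x}ᶜ : Set V)).bChromaticNumber : ℤ) ≤ G.bChromaticNumber + (n / 2 - 2) := by
  have hlow := Stage5.lower_bound G hn hn5 x
  have hup := Stage5.upper_bound G hconn hn hn5 x
  constructor
  · omega
  · omega
end

section
/- If G is a quasi-line graph, then for every vertex x of G, the b-chromatic number of the vertex-deleted subgraph satisfies b(G - {x}) ≤ b(G) + 2. -/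
namespace BChromAux


variable {V : Type*} (G : SimpleGraph V)

/-- Color `s` is "good" for the coloring `γ` with palette `P`: some vertex of color `s`
has neighbors of every other color of `P`. -/
def Good (γ : V → ℕ) (P : Finset ℕ) (s : ℕ) : Prop :=
  ∃ v, γ v = s ∧ ∀ t ∈ P, t ≠ s → ∃ w, G.Adj v w ∧ γ w = t

/-- Eliminating a bad color class: every vertex of a bad class has a missing color,
recolor it there, preferring the color `κ` when it is missing. -/
lemma elim_step (γ : V → ℕ) (P : Finset ℕ)
    (hprop : ∀ u v, G.Adj u v → γ u ≠ γ v)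
    (himg : ∀ v, γ v ∈ P) (t κ : ℕ) (hκP : κ ∈ P) (hκt : κ ≠ t)
    (hbad : ¬ Good G γ P t) :
    ∃ γ' : V → ℕ,
      (∀ u v, G.Adj u v → γ' u ≠ γ' v) ∧
      (∀ v, γ v ≠ t → γ' v = γ v) ∧
      (∀ v, γ' v ∈ P.erase t) ∧
      (∀ v, γ v = t → (∀ w, G.Adj v w → γ w ≠ κ) → γ' v = κ) := by
  classical
  have hmiss : ∀ v, γ v = t → ∃ s, s ∈ P ∧ s ≠ t ∧ ∀ w, G.Adj v w → γ w ≠ s := by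
    intro v hv
    by_contra h
    push_neg at h
    exact hbad ⟨v, hv, fun s hs hst => h s hs hst⟩
  refine ⟨fun v => if hv : γ v = t then
      (if _ : ∀ w, G.Adj v w → γ w ≠ κ then κ else (hmiss v hv).choose) else γ v,
      ?_, ?_, ?_, ?_⟩
  · intro u v huv
    by_cases hu : γ u = t <;> by_cases hv : γ v = t
    · exact absurd (hu.trans hv.symm) (hprop u v huv)
    · simp only [dif_pos hu, dif_neg hv]
      by_cases h2 : ∀ w, G.Adj u w → γ w ≠ κ
      · rw [dif_pos h2]; exact fun h => (h2 v huv) h.symm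
      · rw [dif_neg h2]
        exact fun h => ((hmiss u hu).choose_spec.2.2 v huv) h.symm
    · simp only [dif_neg hu, dif_pos hv]
      by_cases h2 : ∀ w, G.Adj v w → γ w ≠ κ
      · rw [dif_pos h2]; exact fun h => (h2 u (G.adj_symm huv)) h
      · rw [dif_neg h2]
        exact fun h => ((hmiss v hv).choose_spec.2.2 u (G.adj_symm huv)) h
    · simp only [dif_neg hu, dif_neg hv]; exact hprop u v huv
  · intro v hv; simp only [dif_neg hv]
  · intro v
    by_cases hv : γ v = t
    · simp only [dif_pos hv]
      by_cases h2 : ∀ w, G.Adj v w → γ w ≠ κ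
      · rw [dif_pos h2]; exact Finset.mem_erase.mpr ⟨hκt, hκP⟩
      · rw [dif_neg h2]
        exact Finset.mem_erase.mpr ⟨(hmiss v hv).choose_spec.2.1, (hmiss v hv).choose_spec.1⟩
    · simp only [dif_neg hv]; exact Finset.mem_erase.mpr ⟨hv, himg v⟩
  · intro v hv h2; simp only [dif_pos hv, dif_pos h2]

/-- A good class stays good after eliminating another class. -/
lemma good_persist {γ γ' : V → ℕ} {P : Finset ℕ} {t s : ℕ}
    (hkeep : ∀ v, γ v ≠ t → γ' v = γ v) (hst : s ≠ t)
    (h : Good G γ P s) : Good G γ' (P.erase t) s := by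
  obtain ⟨v, hv, hsee⟩ := h
  refine ⟨v, (hkeep v (by rw [hv]; exact hst)).trans hv, fun t' ht' hts => ?_⟩
  obtain ⟨hne, htP⟩ := Finset.mem_erase.mp ht'
  obtain ⟨w, hw, hwc⟩ := hsee t' htP hts
  exact ⟨w, hw, (hkeep w (by rw [hwc]; exact hne)).trans hwc⟩

/-- An all-good proper coloring with palette `P` gives a b-coloring with `P.card` colors. -/
lemma finalize [Fintype V] (γ : V → ℕ) (P : Finset ℕ)
    (hprop : ∀ u v, G.Adj u v → γ u ≠ γ v)
    (himg : ∀ v, γ v ∈ P)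
    (hgood : ∀ s ∈ P, Good G γ P s) :
    ∃ c : V → Fin P.card, G.IsBColoring c := by
  classical
  let e := P.orderIsoOfFin rfl
  refine ⟨fun v => e.symm ⟨γ v, himg v⟩, ?_, ?_⟩
  · intro u v huv h
    exact hprop u v huv (congrArg Subtype.val (e.symm.injective h))
  · intro i
    obtain ⟨v, hv, hsee⟩ := hgood (e i : ℕ) (e i).2
    refine ⟨v, ?_, ?_⟩
    · have : (⟨γ v, himg v⟩ : {a // a ∈ P}) = e i := Subtype.ext hv
      exact (OrderIso.symm_apply_eq e).mpr this
    · intro j hj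
      have htP : ((e j : {a // a ∈ P}) : ℕ) ∈ P := (e j).2
      have hts : ((e j : {a // a ∈ P}) : ℕ) ≠ (e i : ℕ) := by
        intro h
        exact hj (e.injective (Subtype.ext h))
      obtain ⟨w, hw, hwc⟩ := hsee _ htP hts
      refine ⟨w, hw, ?_⟩
      have : (⟨γ w, himg w⟩ : {a // a ∈ P}) = e j := Subtype.ext hwc
      exact (OrderIso.symm_apply_eq e).mpr this


lemma master [Fintype V] [DecidableEq V] (hG : G.IsQuasiLine) (x : V)
    (k : ℕ) (c : ↥({x}ᶜ : Set V) → Fin k)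
    (hbc : (G.induce ({x}ᶜ : Set V)).IsBColoring c) :
    ∃ m, (∃ c' : V → Fin m, G.IsBColoring c') ∧ k ≤ m + 2 := by
  classical
  -- the extended ℕ-valued coloring: x gets the fresh color k
  set col : V → ℕ := fun v =>
    if h : v = x then k else (c ⟨v, Set.mem_compl_singleton_iff.mpr h⟩ : ℕ) with hcoldef
  have hcolx : col x = k := by simp [hcoldef]
  have hcolv : ∀ (v : V) (h : v ≠ x), col v = (c ⟨v, Set.mem_compl_singleton_iff.mpr h⟩ : ℕ) := by
    intro v h; simp [hcoldef, h]
  have hlt : ∀ v, v ≠ x → col v < k := by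
    intro v h; rw [hcolv v h]; exact (c _).isLt
  have hcolkx : ∀ v, col v = k → v = x := by
    intro v hv
    by_contra h
    exact absurd hv (Nat.ne_of_lt (hlt v h))
  have hproper : ∀ u v, G.Adj u v → col u ≠ col v := by
    intro u v huv
    by_cases hu : u = x <;> by_cases hv : v = x
    · subst hu; subst hv; exact absurd huv (G.irrefl)
    · subst hu; rw [hcolx]; exact fun h => absurd h.symm (Nat.ne_of_lt (hlt v hv))
    · subst hv; rw [hcolx]; exact fun h => absurd h (Nat.ne_of_lt (hlt u hu))
    · rw [hcolv u hu, hcolv v hv]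
      have hadj : (G.induce ({x}ᶜ : Set V)).Adj ⟨u, Set.mem_compl_singleton_iff.mpr hu⟩
          ⟨v, Set.mem_compl_singleton_iff.mpr hv⟩ := huv
      intro h
      exact hbc.1 _ _ hadj (Fin.val_injective h)
  by_cases hA : ∃ α : Fin k, ∀ w, G.Adj x w → col w ≠ (α : ℕ)
  · -- Case A : extend the coloring directly, giving x a color missing on N(x)
    obtain ⟨α, hα⟩ := hA
    refine ⟨k, ⟨fun v => if h : v = x then α else c ⟨v, Set.mem_compl_singleton_iff.mpr h⟩,
      ?_, ?_⟩, by omega⟩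
    · intro u v huv
      by_cases hu : u = x <;> by_cases hv : v = x
      · subst hu; subst hv; exact absurd huv (G.irrefl)
      · subst hu
        simp only [dif_pos rfl, dif_neg hv]
        intro h
        exact hα v huv (by rw [hcolv v hv, ← h]; simp)
      · subst hv
        simp only [dif_pos rfl, dif_neg hu]
        intro h
        exact hα u (G.adj_symm huv) (by rw [hcolv u hu, h]; simp)
      · simp only [dif_neg hu, dif_neg hv]
        have hadj : (G.induce ({x}ᶜ : Set V)).Adj ⟨u, Set.mem_compl_singleton_iff.mpr hu⟩
            ⟨v, Set.mem_compl_singleton_iff.mpr hv⟩ := huv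
        exact hbc.1 _ _ hadj
    · intro i
      obtain ⟨v, hv, hsee⟩ := hbc.2 i
      have hvx : (v : V) ≠ x := Set.mem_compl_singleton_iff.mp v.2
      refine ⟨(v : V), ?_, ?_⟩
      · simp only [dif_neg hvx, Subtype.coe_eta]; exact hv
      · intro j hj
        obtain ⟨w, hadj, hw⟩ := hsee j hj
        have hwx : (w : V) ≠ x := Set.mem_compl_singleton_iff.mp w.2
        refine ⟨(w : V), hadj, ?_⟩
        simp only [dif_neg hwx, Subtype.coe_eta]; exact hw
  · -- Case B : every color appears in the neighborhood of x
    push_neg at hA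
    have hXcol : ∀ s, s < k → ∃ w, G.Adj x w ∧ col w = s := by
      intro s hs
      obtain ⟨w, hw1, hw2⟩ := hA ⟨s, hs⟩
      exact ⟨w, hw1, hw2⟩
    -- the b-vertices ("criticals") of the original coloring
    have hcrit : ∀ s, s < k → ∃ u, u ≠ x ∧ col u = s ∧
        ∀ t, t < k → t ≠ s → ∃ w, G.Adj u w ∧ col w = t := by
      intro s hs
      obtain ⟨v, hv, hsee⟩ := hbc.2 ⟨s, hs⟩
      have hvx : (v : V) ≠ x := Set.mem_compl_singleton_iff.mp v.2
      refine ⟨(v : V), hvx, by rw [hcolv _ hvx, Subtype.coe_eta, hv], ?_⟩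
      intro t ht hts
      obtain ⟨w, hadj, hw⟩ := hsee ⟨t, ht⟩ (by
        intro h
        exact hts (congrArg Fin.val (h.trans rfl)))
      have hwx : (w : V) ≠ x := Set.mem_compl_singleton_iff.mp w.2
      exact ⟨(w : V), hadj, by rw [hcolv _ hwx, Subtype.coe_eta, hw]⟩
    set ucrit : ℕ → V := fun s => if h : s < k then (hcrit s h).choose else x with hucritdef
    have hu1 : ∀ s, (h : s < k) → ucrit s ≠ x ∧ col (ucrit s) = s ∧
        ∀ t, t < k → t ≠ s → ∃ w, G.Adj (ucrit s) w ∧ col w = t := by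
      intro s h
      simp only [hucritdef, dif_pos h]
      exact (hcrit s h).choose_spec
    -- at most two neighbors of x of each color (quasi-line at x)
    have hpairgen : ∀ (S : Set V), G.IsClique S → ∀ s : ℕ,
        ∃ dS, ∀ d, G.Adj x d → col d = s → d ∈ S → d = dS := by
      intro S hS s
      by_cases h : ∃ d, G.Adj x d ∧ col d = s ∧ d ∈ S
      · obtain ⟨d₀, hd₀a, hd₀c, hd₀S⟩ := h
        refine ⟨d₀, fun d hda hdc hdS => ?_⟩
        by_contra hne
        exact hproper d d₀ (hS hdS hd₀S hne) (hdc.trans hd₀c.symm)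
      · exact ⟨x, fun d hda hdc hdS => absurd ⟨d, hda, hdc, hdS⟩ h⟩
    have hpair : ∀ s : ℕ, ∃ d₁ d₂, ∀ d, G.Adj x d → col d = s → d = d₁ ∨ d = d₂ := by
      intro s
      obtain ⟨A, B, hAcl, hBcl, hcov⟩ := hG x
      obtain ⟨d₁, h₁⟩ := hpairgen A hAcl s
      obtain ⟨d₂, h₂⟩ := hpairgen B hBcl s
      refine ⟨d₁, d₂, fun d hda hdc => ?_⟩
      rcases hcov ((G.mem_neighborSet x d).mpr hda) with hdA | hdB
      · exact Or.inl (h₁ d hda hdc hdA)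
      · exact Or.inr (h₂ d hda hdc hdB)
    -- the "far" clique at a neighbor d of x (quasi-line at d)
    have hQd : ∀ d : V, ∃ Q : Set V, G.IsClique Q ∧
        (G.Adj x d → ∀ u, G.Adj d u → ¬ G.Adj x u → u ≠ x → u ∈ Q) := by
      intro d
      by_cases hd : G.Adj x d
      · obtain ⟨C, D, hCcl, hDcl, hcovd⟩ := hG d
        rcases hcovd ((G.mem_neighborSet d x).mpr (G.adj_symm hd)) with hxC | hxD
        · refine ⟨D, hDcl, fun _ u hu hnxu hux => ?_⟩
          rcases hcovd ((G.mem_neighborSet d u).mpr hu) with huC | huD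
          · exact absurd (hCcl hxC huC (Ne.symm hux)) hnxu
          · exact huD
        · refine ⟨C, hCcl, fun _ u hu hnxu hux => ?_⟩
          rcases hcovd ((G.mem_neighborSet d u).mpr hu) with huC | huD
          · exact huC
          · exact absurd (hDcl hxD huD (Ne.symm hux)) hnxu
      · exact ⟨∅, G.isClique_empty, fun h => absurd h hd⟩
    -- stage 0 : palette {0,...,k}, x has the fresh color k
    set P0 : Finset ℕ := Finset.range (k+1) with hP0def
    have hmemlt : ∀ s, s ∈ P0 → s < k + 1 := by
      intro s hs; rw [hP0def] at hs; exact Finset.mem_range.mp hs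
    have hkP0 : (k : ℕ) ∈ P0 := by rw [hP0def]; exact Finset.self_mem_range_succ k
    have himg0 : ∀ v, col v ∈ P0 := by
      intro v
      by_cases h : v = x
      · subst h; rw [hcolx]; exact hkP0
      · rw [hP0def]; exact Finset.mem_range.mpr (Nat.lt_succ_of_lt (hlt v h))
    have hg0k : Good G col P0 k := by
      refine ⟨x, hcolx, fun t ht htk => ?_⟩
      have htlt : t < k := by have := hmemlt t ht; omega
      obtain ⟨w, hw, hwc⟩ := hXcol t htlt
      exact ⟨w, hw, hwc⟩
    by_cases hb0 : ∀ s ∈ P0, Good G col P0 s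
    · obtain ⟨cfin, hfin⟩ := finalize G col P0 hproper himg0 hb0
      refine ⟨P0.card, ⟨cfin, hfin⟩, ?_⟩
      rw [hP0def, Finset.card_range]; omega
    push_neg at hb0
    obtain ⟨j1, hj1P, hj1bad⟩ := hb0
    have hj1k : j1 ≠ k := fun h => hj1bad (h ▸ hg0k)
    have hj1lt : j1 < k := by have := hmemlt j1 hj1P; omega
    obtain ⟨d₁, d₂, hd⟩ := hpair j1
    obtain ⟨Q₁, hQ₁cl, hQ₁mem⟩ := hQd d₁
    obtain ⟨Q₂, hQ₂cl, hQ₂mem⟩ := hQd d₂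
    -- stage 1 : eliminate the bad class j1; its part away from x joins class k
    obtain ⟨γ₁, hprop₁, hkeep₁, himg₁, hpref₁⟩ :=
      elim_step G col P0 hproper himg0 j1 k hkP0 (Ne.symm hj1k) hj1bad
    set P1 : Finset ℕ := P0.erase j1 with hP1def
    have hP1sub : P1 ⊆ P0 := Finset.erase_subset _ _
    have hkP1 : (k : ℕ) ∈ P1 := Finset.mem_erase.mpr ⟨Ne.symm hj1k, hkP0⟩
    have hγ₁x : γ₁ x = k := by
      rw [hkeep₁ x (by rw [hcolx]; exact Ne.symm hj1k)]; exact hcolx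
    have hU1 : ∀ v, col v ∈ P1 → γ₁ v = col v := by
      intro v hv; exact hkeep₁ v (Finset.mem_erase.mp hv).1
    have hS1 : ∀ w, col w = j1 → ¬ G.Adj x w → γ₁ w = k := by
      intro w hw hnadj
      refine hpref₁ w hw ?_
      intro w' hadj hk'
      have hw'x := hcolkx w' hk'
      subst hw'x
      exact hnadj (G.adj_symm hadj)
    have hg1k : Good G γ₁ P1 k := good_persist (G := G) hkeep₁ (Ne.symm hj1k) hg0k
    -- a still-bad class misses exactly the color k at its critical vertex
    have trapgen : ∀ (γτ : V → ℕ) (Pτ : Finset ℕ),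
        (∀ v, col v ∈ Pτ → γτ v = col v) → Pτ ⊆ P0 →
        ∀ s, s ∈ Pτ → s ≠ k → ¬ Good G γτ Pτ s →
          (∀ w, G.Adj (ucrit s) w → γτ w ≠ k) := by
      intro γτ Pτ hUτ hPsub s hsP hsk hbad
      have hslt : s < k := by have := hmemlt s (hPsub hsP); omega
      obtain ⟨hux, hucol, husee⟩ := hu1 s hslt
      have hus : γτ (ucrit s) = s := by
        rw [hUτ _ (by rw [hucol]; exact hsP)]; exact hucol
      have h2 : ¬ ∀ t ∈ Pτ, t ≠ s → ∃ w, G.Adj (ucrit s) w ∧ γτ w = t :=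
        fun h => hbad ⟨ucrit s, hus, h⟩
      push_neg at h2
      obtain ⟨t, htP, hts, hmiss⟩ := h2
      have htk : t = k := by
        by_contra htk
        have htlt : t < k := by have := hmemlt t (hPsub htP); omega
        obtain ⟨w, hw, hwc⟩ := husee t htlt hts
        exact hmiss w hw (by rw [hUτ w (by rw [hwc]; exact htP)]; exact hwc)
      subst htk
      exact hmiss
    -- trapped criticals lie in Q₁ ∪ Q₂
    have traploc : ∀ (γτ : V → ℕ), (∀ w, col w = j1 → ¬ G.Adj x w → γτ w = k) → (γτ x = k) →
        ∀ s, s < k → s ≠ j1 → (∀ w, G.Adj (ucrit s) w → γτ w ≠ k) →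
        (ucrit s ∈ Q₁ ∨ ucrit s ∈ Q₂) := by
      intro γτ hS1τ hγx s hslt hsj1 hmiss
      obtain ⟨hux, hucol, husee⟩ := hu1 s hslt
      have hnux : ¬ G.Adj x (ucrit s) := fun h => hmiss x (G.adj_symm h) hγx
      obtain ⟨w₀, hw₀adj, hw₀col⟩ := husee j1 hj1lt (Ne.symm hsj1)
      have hxw₀ : G.Adj x w₀ := by
        by_contra hn
        exact hmiss w₀ hw₀adj (hS1τ w₀ hw₀col hn)
      rcases hd w₀ hxw₀ hw₀col with h1 | h2
      · subst h1
        exact Or.inl (hQ₁mem hxw₀ (ucrit s) (G.adj_symm hw₀adj) hnux hux)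
      · subst h2
        exact Or.inr (hQ₂mem hxw₀ (ucrit s) (G.adj_symm hw₀adj) hnux hux)
    by_cases hb1 : ∀ s ∈ P1, Good G γ₁ P1 s
    · obtain ⟨cfin, hfin⟩ := finalize G γ₁ P1 hprop₁ himg₁ hb1
      refine ⟨P1.card, ⟨cfin, hfin⟩, ?_⟩
      rw [hP1def, Finset.card_erase_of_mem hj1P, hP0def, Finset.card_range]
      omega
    -- choose t2, preferring a bad class whose critical lies in Q₁
    have hexists2 : ∃ t2, t2 ∈ P1 ∧ t2 ≠ k ∧ ¬ Good G γ₁ P1 t2 ∧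
        (ucrit t2 ∈ Q₁ ∨ ∀ s ∈ P1, s ≠ k → ¬ Good G γ₁ P1 s → ucrit s ∉ Q₁) := by
      by_cases hsel : ∃ t, t ∈ P1 ∧ t ≠ k ∧ ¬ Good G γ₁ P1 t ∧ ucrit t ∈ Q₁
      · obtain ⟨t, h1, h2, h3, h4⟩ := hsel
        exact ⟨t, h1, h2, h3, Or.inl h4⟩
      · push_neg at hb1
        obtain ⟨t, htP, htbad⟩ := hb1
        have htk : t ≠ k := fun h => htbad (h ▸ hg1k)
        push_neg at hsel
        exact ⟨t, htP, htk, htbad, Or.inr (fun s hs h1 h2 => hsel s hs h1 h2)⟩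
    obtain ⟨t2, ht2P, ht2k, ht2bad, ht2Q⟩ := hexists2
    have ht2lt : t2 < k := by have := hmemlt t2 (hP1sub ht2P); omega
    -- stage 2 elimination
    obtain ⟨γ₂, hprop₂, hkeep₂, himg₂, hpref₂⟩ :=
      elim_step G γ₁ P1 hprop₁ himg₁ t2 k hkP1 (Ne.symm ht2k) ht2bad
    set P2 : Finset ℕ := P1.erase t2 with hP2def
    have hP2sub : P2 ⊆ P0 := fun a ha => hP1sub (Finset.mem_of_mem_erase ha)
    have hkP2 : (k : ℕ) ∈ P2 := Finset.mem_erase.mpr ⟨Ne.symm ht2k, hkP1⟩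
    have hγ₂x : γ₂ x = k := by
      rw [hkeep₂ x (by rw [hγ₁x]; exact Ne.symm ht2k)]; exact hγ₁x
    have hU2 : ∀ v, col v ∈ P2 → γ₂ v = col v := by
      intro v hv
      have h1 := Finset.mem_erase.mp hv
      have hv1 : γ₁ v = col v := hU1 v h1.2
      rw [hkeep₂ v (by rw [hv1]; exact h1.1)]; exact hv1
    have hg2k : Good G γ₂ P2 k := good_persist (G := G) hkeep₂ (Ne.symm ht2k) hg1k
    have ht2miss := trapgen γ₁ P1 hU1 hP1sub t2 ht2P ht2k ht2bad
    have ht2new : γ₂ (ucrit t2) = k := by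
      refine hpref₂ (ucrit t2) ?_ ht2miss
      rw [hU1 (ucrit t2) (by rw [(hu1 t2 ht2lt).2.1]; exact ht2P)]
      exact (hu1 t2 ht2lt).2.1
    by_cases hb2 : ∀ s ∈ P2, Good G γ₂ P2 s
    · obtain ⟨cfin, hfin⟩ := finalize G γ₂ P2 hprop₂ himg₂ hb2
      refine ⟨P2.card, ⟨cfin, hfin⟩, ?_⟩
      rw [hP2def, Finset.card_erase_of_mem ht2P, hP1def, Finset.card_erase_of_mem hj1P,
        hP0def, Finset.card_range]
      omega
    push_neg at hb2
    obtain ⟨t3, ht3P, ht3bad⟩ := hb2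
    have ht3k : t3 ≠ k := fun h => ht3bad (h ▸ hg2k)
    have ht3lt : t3 < k := by have := hmemlt t3 (hP2sub ht3P); omega
    -- stage 3 elimination
    obtain ⟨γ₃, hprop₃, hkeep₃, himg₃, hpref₃⟩ :=
      elim_step G γ₂ P2 hprop₂ himg₂ t3 k hkP2 (Ne.symm ht3k) ht3bad
    set P3 : Finset ℕ := P2.erase t3 with hP3def
    have hU3 : ∀ v, col v ∈ P3 → γ₃ v = col v := by
      intro v hv
      have h1 := Finset.mem_erase.mp hv
      have hv1 : γ₂ v = col v := hU2 v h1.2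
      rw [hkeep₃ v (by rw [hv1]; exact h1.1)]; exact hv1
    have hg3k : Good G γ₃ P3 k := good_persist (G := G) hkeep₃ (Ne.symm ht3k) hg2k
    have ht3miss := trapgen γ₂ P2 hU2 hP2sub t3 ht3P ht3k ht3bad
    have ht3new : γ₃ (ucrit t3) = k := by
      refine hpref₃ (ucrit t3) ?_ ht3miss
      rw [hU2 (ucrit t3) (by rw [(hu1 t3 ht3lt).2.1]; exact ht3P)]
      exact (hu1 t3 ht3lt).2.1
    -- every class still bad after stage 2 has its critical in Q₂
    have hloc : ∀ s, s ∈ P2 → s ≠ k → ¬ Good G γ₂ P2 s → ucrit s ∈ Q₂ := by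
      intro s hsP hsk hsbad
      have hst2 : s ≠ t2 := (Finset.mem_erase.mp hsP).1
      have hsP1 : s ∈ P1 := Finset.mem_of_mem_erase hsP
      have hsbad1 : ¬ Good G γ₁ P1 s := fun h => hsbad (good_persist (G := G) hkeep₂ hst2 h)
      have hslt : s < k := by have := hmemlt s (hP2sub hsP); omega
      have hsj1 : s ≠ j1 := (Finset.mem_erase.mp hsP1).1
      have hmiss2 := trapgen γ₂ P2 hU2 hP2sub s hsP hsk hsbad
      have hmiss1 := trapgen γ₁ P1 hU1 hP1sub s hsP1 hsk hsbad1
      rcases traploc γ₁ hS1 hγ₁x s hslt hsj1 hmiss1 with hQ1 | hQ2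
      · rcases ht2Q with ht2Q1 | ht2none
        · exfalso
          have hne : ucrit s ≠ ucrit t2 := by
            intro h
            have h1 := (hu1 s hslt).2.1
            have h2 := (hu1 t2 ht2lt).2.1
            rw [h] at h1
            exact hst2 (h1.symm.trans h2)
          exact hmiss2 (ucrit t2) (hQ₁cl hQ1 ht2Q1 hne) ht2new
        · exact absurd hQ1 (ht2none s hsP1 hsk hsbad1)
      · exact hQ2
    have ht3Q2 : ucrit t3 ∈ Q₂ := hloc t3 ht3P ht3k ht3bad
    -- after stage 3 everything is good
    have hfinal : ∀ s ∈ P3, Good G γ₃ P3 s := by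
      intro s hsP3
      by_cases hsk : s = k
      · subst hsk; exact hg3k
      by_cases hsg2 : Good G γ₂ P2 s
      · exact good_persist (G := G) hkeep₃ (Finset.mem_erase.mp hsP3).1 hsg2
      · have hsP2 : s ∈ P2 := Finset.mem_of_mem_erase hsP3
        have hslt : s < k := by have := hmemlt s (hP2sub hsP2); omega
        have hsQ2 : ucrit s ∈ Q₂ := hloc s hsP2 hsk hsg2
        have hst3 : s ≠ t3 := (Finset.mem_erase.mp hsP3).1
        have hne : ucrit s ≠ ucrit t3 := by
          intro h
          have h1 := (hu1 s hslt).2.1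
          have h2 := (hu1 t3 ht3lt).2.1
          rw [h] at h1
          exact hst3 (h1.symm.trans h2)
        have hadj : G.Adj (ucrit s) (ucrit t3) := hQ₂cl hsQ2 ht3Q2 hne
        refine ⟨ucrit s, ?_, ?_⟩
        · rw [hU3 (ucrit s) (by rw [(hu1 s hslt).2.1]; exact hsP3)]
          exact (hu1 s hslt).2.1
        · intro t htP3 hts
          by_cases htk : t = k
          · subst htk; exact ⟨ucrit t3, hadj, ht3new⟩
          · have htlt : t < k := by
              have := hmemlt t (hP2sub (Finset.mem_of_mem_erase htP3)); omega
            obtain ⟨w, hw, hwc⟩ := (hu1 s hslt).2.2 t htlt hts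
            refine ⟨w, hw, ?_⟩
            rw [hU3 w (by rw [hwc]; exact htP3)]; exact hwc
    obtain ⟨cfin, hfin⟩ := finalize G γ₃ P3 hprop₃ himg₃ hfinal
    refine ⟨P3.card, ⟨cfin, hfin⟩, ?_⟩
    rw [hP3def, Finset.card_erase_of_mem ht3P, hP2def, Finset.card_erase_of_mem ht2P,
      hP1def, Finset.card_erase_of_mem hj1P, hP0def, Finset.card_range]
    omega

end BChromAux

theorem bChromaticNumber_deleteVert_le_of_quasiLine {V : Type*} [Fintype V] [DecidableEq V]
    (G : SimpleGraph V) (hG : G.IsQuasiLine) (x : V) :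
    (G.induce ({x}ᶜ : Set V)).bChromaticNumber ≤ G.bChromaticNumber + 2 := by
  classical
  have hbddG : BddAbove {k | ∃ c : V → Fin k, G.IsBColoring c} := by
    refine ⟨Fintype.card V, fun m hm => ?_⟩
    obtain ⟨cm, hcm⟩ := hm
    have hinj : Function.Injective (fun i : Fin m => (hcm.2 i).choose) := by
      intro i j hij
      have hi := (hcm.2 i).choose_spec.1
      have hj := (hcm.2 j).choose_spec.1
      rw [show (hcm.2 i).choose = (hcm.2 j).choose from hij] at hi
      exact hi ▸ hj
    simpa using Fintype.card_le_of_injective _ hinj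
  rw [SimpleGraph.bChromaticNumber, SimpleGraph.bChromaticNumber]
  rcases Set.eq_empty_or_nonempty
      {k | ∃ c : ↥({x}ᶜ : Set V) → Fin k, (G.induce ({x}ᶜ : Set V)).IsBColoring c} with he | hne
  · rw [he, csSup_empty]
    exact Nat.zero_le _
  · refine csSup_le hne ?_
    intro k hk
    obtain ⟨c, hc⟩ := hk
    obtain ⟨m, hmem, hkm⟩ := BChromAux.master G hG x k c hc
    exact hkm.trans (Nat.add_le_add_right (le_csSup hbddG hmem) 2)
end

section
/- If G is a graph of girth at least 5, then for every vertex x of G, the b-chromatic number of the vertex-deleted subgraph satisfies b(G - {x}) ≤ b(G) + 1. -/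
open SimpleGraph

section Aux

variable {V : Type*} (G : SimpleGraph V) (x : V) {k : ℕ} (c0 : V → Fin k)

/-- `v` is a b-vertex of color `i` for the coloring `c0` of `G - x`. -/
def BvtxAt (v : V) (i : Fin k) : Prop :=
  v ≠ x ∧ c0 v = i ∧ ∀ j, j ≠ i → ∃ u, u ≠ x ∧ G.Adj v u ∧ c0 u = j

/-- color class `i` has a b-vertex adjacent to `x`. -/
def AnchoredAt (i : Fin k) : Prop := ∃ v, BvtxAt G x c0 v i ∧ G.Adj x v

/-- every b-vertex of class `d` has all its class-`s` neighbours inside `N(x)`. -/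
def Dtp (s d : Fin k) : Prop :=
  ∀ v, BvtxAt G x c0 v d → ∀ p, G.Adj v p → p ≠ x → c0 p = s → G.Adj x p

variable {G x c0}

lemma anch_not_dtp (hT : ∀ {a b : V}, G.Adj x a → G.Adj x b → G.Adj a b → False)
    {s d : Fin k} (hds : d ≠ s) (h : AnchoredAt G x c0 d) : ¬ Dtp G x c0 s d := by
  obtain ⟨u, hu, hadj⟩ := h
  intro hD
  obtain ⟨w, hwx, hadjw, hcw⟩ := hu.2.2 s (Ne.symm hds)
  exact hT hadj (hD u hu w hadjw hwx hcw) hadjw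

lemma dtp_not_two (hT : ∀ {a b : V}, G.Adj x a → G.Adj x b → G.Adj a b → False)
    (hQ : ∀ {a b v : V}, G.Adj x a → G.Adj x b → a ≠ b → v ≠ x → G.Adj a v → G.Adj b v → False)
    (hbv : ∀ i, ∃ v, BvtxAt G x c0 v i) {s s' d : Fin k}
    (hss' : s ≠ s') (hds : d ≠ s) (hds' : d ≠ s')
    (h : Dtp G x c0 s d) (h' : Dtp G x c0 s' d) : False := by
  obtain ⟨v, hv⟩ := hbv d
  obtain ⟨p, hpx, hadjp, hcp⟩ := hv.2.2 s (Ne.symm hds)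
  obtain ⟨p', hpx', hadjp', hcp'⟩ := hv.2.2 s' (Ne.symm hds')
  have hxp : G.Adj x p := h v hv p hadjp hpx hcp
  have hxp' : G.Adj x p' := h' v hv p' hadjp' hpx' hcp'
  have hpp' : p ≠ p' := fun hh => hss' (by rw [← hcp, ← hcp', hh])
  exact hQ hxp hxp' hpp' hv.1 hadjp.symm hadjp'.symm

lemma exists_good_s (hT : ∀ {a b : V}, G.Adj x a → G.Adj x b → G.Adj a b → False)
    (hQ : ∀ {a b v : V}, G.Adj x a → G.Adj x b → a ≠ b → v ≠ x → G.Adj a v → G.Adj b v → False)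
    (hbv : ∀ i, ∃ v, BvtxAt G x c0 v i) {s0 : Fin k} (hs0 : ¬ AnchoredAt G x c0 s0) :
    ∃ s, ¬ AnchoredAt G x c0 s ∧
      ∀ d d', d ≠ s → Dtp G x c0 s d → d' ≠ s → Dtp G x c0 s d' → d = d' := by
  classical
  by_contra hcon
  push_neg at hcon
  set T : Finset (Fin k) := Finset.univ.filter (fun i => ¬ AnchoredAt G x c0 i) with hT'
  set g : Fin k → Finset (Fin k) :=
    fun s => Finset.univ.filter (fun d => d ≠ s ∧ Dtp G x c0 s d) with hg
  have hmemg : ∀ s d, d ∈ g s ↔ (d ≠ s ∧ Dtp G x c0 s d) := by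
    intro s d; simp [hg]
  have hmemT : ∀ i, i ∈ T ↔ ¬ AnchoredAt G x c0 i := by intro i; simp [hT']
  have hsub : ∀ s, g s ⊆ T := by
    intro s d hd
    rw [hmemg] at hd
    rw [hmemT]
    intro hA
    exact anch_not_dtp hT hd.1 hA hd.2
  have hdisj : ∀ s ∈ T, ∀ s' ∈ T, s ≠ s' → Disjoint (g s) (g s') := by
    intro s _ s' _ hss'
    rw [Finset.disjoint_left]
    intro d hd hd'
    rw [hmemg] at hd hd'
    exact dtp_not_two hT hQ hbv hss' hd.1 hd'.1 hd.2 hd'.2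
  have hcard2 : ∀ s ∈ T, 2 ≤ (g s).card := by
    intro s hs
    rw [hmemT] at hs
    obtain ⟨d, d', hds, hDd, hd's, hDd', hdd'⟩ := hcon s hs
    refine Finset.one_lt_card.mpr ⟨d, ?_, d', ?_, hdd'⟩ <;> rw [hmemg]
    exacts [⟨hds, hDd⟩, ⟨hd's, hDd'⟩]
  have h1 : (T.biUnion g).card = ∑ s ∈ T, (g s).card := Finset.card_biUnion hdisj
  have h2 : (T.biUnion g) ⊆ T := by
    intro d hd
    rw [Finset.mem_biUnion] at hd
    obtain ⟨s, _, hds⟩ := hd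
    exact hsub s hds
  have h3 : ∑ s ∈ T, (g s).card ≤ T.card := h1 ▸ Finset.card_le_card h2
  have h4 : 2 * T.card ≤ ∑ s ∈ T, (g s).card := by
    calc 2 * T.card = ∑ _s ∈ T, 2 := by rw [Finset.sum_const, smul_eq_mul, mul_comm]
    _ ≤ ∑ s ∈ T, (g s).card := Finset.sum_le_sum hcard2
  have h5 : 0 < T.card := Finset.card_pos.mpr ⟨s0, (hmemT s0).mpr hs0⟩
  omega


lemma dropLemma {V : Type*} (G : SimpleGraph V) {m : ℕ} (c : V → Fin (m+2))
    (hp : ∀ a b, G.Adj a b → c a ≠ c b) (d0 : Fin (m+2))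
    (hbv : ∀ j, j ≠ d0 → ∃ v, c v = j ∧ ∀ e, e ≠ j → ∃ u, G.Adj v u ∧ c u = e) :
    (∃ c'' : V → Fin (m+2), G.IsBColoring c'') ∨ (∃ c'' : V → Fin (m+1), G.IsBColoring c'') := by
  classical
  set σ := Equiv.swap d0 (Fin.last (m+1)) with hσ
  set cσ : V → Fin (m+2) := fun v => σ (c v) with hcσ
  have hpσ : ∀ a b, G.Adj a b → cσ a ≠ cσ b := fun a b hab h => hp a b hab (σ.injective h)
  have hbvσ : ∀ j, j ≠ Fin.last (m+1) →
      ∃ v, cσ v = j ∧ ∀ e, e ≠ j → ∃ u, G.Adj v u ∧ cσ u = e := by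
    intro j hj
    have hj' : σ j ≠ d0 := by
      intro h
      have h2 : j = σ.symm d0 := by rw [← h, Equiv.symm_apply_apply]
      rw [hσ, Equiv.symm_swap, Equiv.swap_apply_left] at h2
      exact hj h2
    obtain ⟨v, hv, hw⟩ := hbv (σ j) hj'
    refine ⟨v, by simp [hcσ, hv, hσ], ?_⟩
    intro e he
    obtain ⟨u, hu, hcu⟩ := hw (σ e) (fun h => he (σ.injective h))
    exact ⟨u, hu, by simp [hcσ, hcu, hσ]⟩
  by_cases hD : ∃ v, cσ v = Fin.last (m+1) ∧ ∀ e, e ≠ Fin.last (m+1) → ∃ u, G.Adj v u ∧ cσ u = e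
  · left
    refine ⟨cσ, hpσ, fun i => ?_⟩
    by_cases hi : i = Fin.last (m+1)
    · subst hi; exact hD
    · exact hbvσ i hi
  · right
    push_neg at hD
    replace hD : ∀ v, cσ v = Fin.last (m+1) →
        ∃ e, e ≠ Fin.last (m+1) ∧ ∀ u, G.Adj v u → cσ u ≠ e := by
      intro v hv
      obtain ⟨e, he, hu⟩ := hD v hv
      exact ⟨e, he, fun u hadj hc => hu u hadj hc⟩
    set c'' : V → Fin (m+1) := fun v =>
      if h : cσ v = Fin.last (m+1) then
        Fin.castPred (hD v h).choose (hD v h).choose_spec.1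
      else Fin.castPred (cσ v) h with hc''
    have hlift : ∀ v (h : ¬ cσ v = Fin.last (m+1)), c'' v = Fin.castPred (cσ v) h := by
      intro v h; simp only [hc'', dif_neg h]
    have hmoved : ∀ v (h : cσ v = Fin.last (m+1)),
        (c'' v).castSucc ≠ Fin.last (m+1) ∧ ∀ u, G.Adj v u → cσ u ≠ (c'' v).castSucc := by
      intro v h
      simp only [hc'', dif_pos h, Fin.castSucc_castPred]
      exact ⟨(hD v h).choose_spec.1, (hD v h).choose_spec.2⟩
    refine ⟨c'', ?_, ?_⟩
    · intro a b hab h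
      by_cases ha : cσ a = Fin.last (m+1) <;> by_cases hb : cσ b = Fin.last (m+1)
      · exact hpσ a b hab (ha.trans hb.symm)
      · refine (hmoved a ha).2 b hab ?_
        rw [h, hlift b hb, Fin.castSucc_castPred]
      · refine (hmoved b hb).2 a hab.symm ?_
        rw [← h, hlift a ha, Fin.castSucc_castPred]
      · refine hpσ a b hab ?_
        rw [hlift a ha, hlift b hb] at h
        have := congrArg Fin.castSucc h
        rwa [Fin.castSucc_castPred, Fin.castSucc_castPred] at this
    · intro i
      have hne : i.castSucc ≠ Fin.last (m+1) := (Fin.castSucc_lt_last i).ne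
      obtain ⟨v, hv, hw⟩ := hbvσ i.castSucc hne
      have hvne : ¬ cσ v = Fin.last (m+1) := by rw [hv]; exact hne
      refine ⟨v, ?_, ?_⟩
      · rw [hlift v hvne]
        have : (Fin.castPred (cσ v) hvne).castSucc = i.castSucc := by
          rw [Fin.castSucc_castPred, hv]
        exact Fin.castSucc_injective _ this
      · intro e he
        obtain ⟨u, hu, hcu⟩ := hw e.castSucc (fun hh => he (Fin.castSucc_injective _ hh))
        have hune : ¬ cσ u = Fin.last (m+1) := by rw [hcu]; exact (Fin.castSucc_lt_last e).ne
        refine ⟨u, hu, ?_⟩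
        rw [hlift u hune]
        have : (Fin.castPred (cσ u) hune).castSucc = e.castSucc := by
          rw [Fin.castSucc_castPred, hcu]
        exact Fin.castSucc_injective _ this

lemma caseI {n : ℕ} {c0 : V → Fin (n+2)}
    (hprop : ∀ a b, a ≠ x → b ≠ x → G.Adj a b → c0 a ≠ c0 b)
    (hAnch : ∀ i, AnchoredAt G x c0 i) :
    ∃ c' : V → Fin (n+3), G.IsBColoring c' := by
  classical
  set c1 : V → Fin (n+3) := fun v => if v = x then Fin.last (n+2) else (c0 v).castSucc with hc1
  have hc1x : c1 x = Fin.last (n+2) := by simp [hc1]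
  have hc1ne : ∀ v, v ≠ x → c1 v = (c0 v).castSucc := by intro v hv; simp [hc1, hv]
  refine ⟨c1, ?_, ?_⟩
  · intro a b hab
    by_cases ha : a = x
    · subst ha
      rw [hc1x, hc1ne b hab.ne']
      exact (Fin.castSucc_lt_last (c0 b)).ne'
    · by_cases hb : b = x
      · subst hb
        rw [hc1x, hc1ne a hab.ne]
        exact (Fin.castSucc_lt_last (c0 a)).ne
      · rw [hc1ne a ha, hc1ne b hb]
        exact fun h => hprop a b ha hb hab (Fin.castSucc_injective _ h)
  · intro i
    by_cases hi : i = Fin.last (n+2)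
    · subst hi
      refine ⟨x, hc1x, ?_⟩
      intro j hj
      obtain ⟨j', rfl⟩ := Fin.exists_castSucc_eq.mpr hj
      obtain ⟨u, hu, hadj⟩ := hAnch j'
      exact ⟨u, hadj, by rw [hc1ne u hu.1, hu.2.1]⟩
    · obtain ⟨i', rfl⟩ := Fin.exists_castSucc_eq.mpr hi
      obtain ⟨u, hu, hadj⟩ := hAnch i'
      refine ⟨u, by rw [hc1ne u hu.1, hu.2.1], ?_⟩
      intro j hj
      by_cases hjl : j = Fin.last (n+2)
      · subst hjl
        exact ⟨x, hadj.symm, hc1x⟩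
      · obtain ⟨j', rfl⟩ := Fin.exists_castSucc_eq.mpr hjl
        have hj' : j' ≠ i' := fun h => hj (by rw [h])
        obtain ⟨w, hwx, hadjw, hcw⟩ := hu.2.2 j' hj'
        exact ⟨w, hadjw, by rw [hc1ne w hwx, hcw]⟩

lemma mainLemma
    (hT : ∀ {a b : V}, G.Adj x a → G.Adj x b → G.Adj a b → False)
    (hQ : ∀ {a b v : V}, G.Adj x a → G.Adj x b → a ≠ b → v ≠ x → G.Adj a v → G.Adj b v → False)
    {n : ℕ} {c0 : V → Fin (n+2)}
    (hprop : ∀ a b, a ≠ x → b ≠ x → G.Adj a b → c0 a ≠ c0 b)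
    (hbv : ∀ i, ∃ v, BvtxAt G x c0 v i) :
    ∃ m, n + 1 ≤ m ∧ ∃ c' : V → Fin m, G.IsBColoring c' := by
  classical
  by_cases hAnch : ∀ i, AnchoredAt G x c0 i
  · exact ⟨n+3, by omega, caseI hprop hAnch⟩
  push_neg at hAnch
  obtain ⟨s0, hs0⟩ := hAnch
  by_cases hMiss : ∃ t, ∀ v, G.Adj x v → c0 v ≠ t
  · obtain ⟨t, ht⟩ := hMiss
    set c2 : V → Fin (n+2) := fun v => if v = x then t else c0 v with hc2
    have hc2x : c2 x = t := by simp [hc2]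
    have hc2k : ∀ v, v ≠ x → c2 v = c0 v := by intro v hv; simp [hc2, hv]
    refine ⟨n+2, by omega, c2, ?_, ?_⟩
    · intro a b hab
      by_cases ha : a = x
      · subst ha
        rw [hc2x, hc2k b hab.ne']
        exact (ht b hab).symm
      · by_cases hb : b = x
        · subst hb
          rw [hc2x, hc2k a hab.ne]
          exact ht a hab.symm
        · rw [hc2k a ha, hc2k b hb]
          exact hprop a b ha hb hab
    · intro i
      obtain ⟨v, hv⟩ := hbv i
      refine ⟨v, by rw [hc2k v hv.1, hv.2.1], ?_⟩
      intro j hj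
      obtain ⟨w, hwx, hadjw, hcw⟩ := hv.2.2 j hj
      exact ⟨w, hadjw, by rw [hc2k w hwx, hcw]⟩
  push_neg at hMiss
  obtain ⟨s, hsA, hsUniq⟩ := exists_good_s hT hQ hbv hs0
  have hesc : ∀ v, G.Adj x v → c0 v = s → ∃ e, e ≠ s ∧ ∀ w, w ≠ x → G.Adj v w → c0 w ≠ e := by
    intro v hadj hcv
    by_contra hno
    push_neg at hno
    refine hsA ⟨v, ⟨hadj.ne', hcv, ?_⟩, hadj⟩
    intro j hj
    obtain ⟨w, hwx, hadjw, hcw⟩ := hno j hj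
    exact ⟨w, hwx, hadjw, hcw⟩
  choose esc hesc1 hesc2 using hesc
  set c3 : V → Fin (n+2) := fun v =>
    if v = x then s else if h : G.Adj x v ∧ c0 v = s then esc v h.1 h.2 else c0 v with hc3
  have hc3x : c3 x = s := by simp [hc3]
  have hc3keep : ∀ v, v ≠ x → c0 v ≠ s → c3 v = c0 v := by
    intro v hv hcv
    simp only [hc3, if_neg hv]
    rw [dif_neg (fun h => hcv h.2)]
  have hc3keep' : ∀ v, v ≠ x → ¬ G.Adj x v → c3 v = c0 v := by
    intro v hv hadj
    simp only [hc3, if_neg hv]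
    rw [dif_neg (fun h => hadj h.1)]
  have hc3moved : ∀ v (h1 : G.Adj x v) (h2 : c0 v = s), c3 v = esc v h1 h2 := by
    intro v h1 h2
    simp only [hc3, if_neg h1.ne']
    rw [dif_pos ⟨h1, h2⟩]
  have hp3 : ∀ a b, G.Adj a b → c3 a ≠ c3 b := by
    intro a b hab
    by_cases ha : a = x
    · rw [ha] at hab ⊢
      rw [hc3x]
      by_cases hb : G.Adj x b ∧ c0 b = s
      · rw [hc3moved b hb.1 hb.2]
        exact (hesc1 b hb.1 hb.2).symm
      · rcases Classical.em (c0 b = s) with hcb | hcb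
        · exact absurd ⟨hab, hcb⟩ hb
        · rw [hc3keep b hab.ne' hcb]
          exact (Ne.symm hcb)
    · by_cases hb : b = x
      · rw [hb] at hab ⊢
        rw [hc3x]
        by_cases ha2 : G.Adj x a ∧ c0 a = s
        · rw [hc3moved a ha2.1 ha2.2]
          exact hesc1 a ha2.1 ha2.2
        · rcases Classical.em (c0 a = s) with hca | hca
          · exact absurd ⟨hab.symm, hca⟩ ha2
          · rw [hc3keep a ha hca]
            exact hca
      · by_cases ha2 : G.Adj x a ∧ c0 a = s <;> by_cases hb2 : G.Adj x b ∧ c0 b = s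
        · exact absurd hab (fun h => hT ha2.1 hb2.1 h)
        · rw [hc3moved a ha2.1 ha2.2]
          rcases Classical.em (G.Adj x b ∧ c0 b = s) with hbb | _
          · exact absurd hbb hb2
          · by_cases hcb : c0 b = s
            · -- b not moved: since ¬(adj ∧ =s) and c0 b = s, ¬adj x b
              have hnb : ¬ G.Adj x b := fun h => hb2 ⟨h, hcb⟩
              rw [hc3keep' b hb hnb]
              exact (hesc2 a ha2.1 ha2.2 b hb hab).symm
            · rw [hc3keep b hb hcb]
              exact (hesc2 a ha2.1 ha2.2 b hb hab).symm
        · -- symmetric: b moved, a not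
          rw [hc3moved b hb2.1 hb2.2]
          by_cases hca : c0 a = s
          · have hna : ¬ G.Adj x a := fun h => ha2 ⟨h, hca⟩
            rw [hc3keep' a ha hna]
            exact hesc2 b hb2.1 hb2.2 a ha hab.symm
          · rw [hc3keep a ha hca]
            exact hesc2 b hb2.1 hb2.2 a ha hab.symm
        · -- neither moved
          have h3a : c3 a = c0 a := by
            by_cases hca : c0 a = s
            · exact hc3keep' a ha (fun h => ha2 ⟨h, hca⟩)
            · exact hc3keep a ha hca
          have h3b : c3 b = c0 b := by
            by_cases hcb : c0 b = s
            · exact hc3keep' b hb (fun h => hb2 ⟨h, hcb⟩)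
            · exact hc3keep b hb hcb
          rw [h3a, h3b]
          exact hprop a b ha hb hab
  -- b-vertex for class s : the vertex x itself
  have hxs : c3 x = s ∧ ∀ j, j ≠ s → ∃ u, G.Adj x u ∧ c3 u = j := by
    refine ⟨hc3x, fun j hj => ?_⟩
    obtain ⟨y, hadj, hcy⟩ := hMiss j
    exact ⟨y, hadj, by rw [hc3keep y hadj.ne' (hcy ▸ hj), hcy]⟩
  -- b-vertex for classes j ≠ s with ¬ Dtp s j
  have hbv3 : ∀ j, j ≠ s → ¬ Dtp G x c0 s j →
      ∃ v, c3 v = j ∧ ∀ e, e ≠ j → ∃ u, G.Adj v u ∧ c3 u = e := by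
    intro j hj hnd
    rw [Dtp] at hnd
    push_neg at hnd
    obtain ⟨v, hv, p, hadjp, hpx, hcp, hnxp⟩ := hnd
    have hcv : c3 v = j := by rw [hc3keep v hv.1 (hv.2.1 ▸ hj), hv.2.1]
    refine ⟨v, hcv, fun e he => ?_⟩
    by_cases hes : e = s
    · subst hes
      exact ⟨p, hadjp, by rw [hc3keep' p hpx hnxp, hcp]⟩
    · obtain ⟨w, hwx, hadjw, hcw⟩ := hv.2.2 e he
      exact ⟨w, hadjw, by rw [hc3keep w hwx (hcw ▸ hes), hcw]⟩
  by_cases hEx : ∃ d, d ≠ s ∧ Dtp G x c0 s d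
  · obtain ⟨d0, hd0s, hd0⟩ := hEx
    have hdrop := dropLemma G c3 hp3 d0 ?_
    · rcases hdrop with ⟨c'', hbc⟩ | ⟨c'', hbc⟩
      · exact ⟨n+2, by omega, c'', hbc⟩
      · exact ⟨n+1, le_refl _, c'', hbc⟩
    · intro j hj
      by_cases hjs : j = s
      · exact hjs ▸ ⟨x, hxs⟩
      · refine hbv3 j hjs ?_
        intro hDj
        exact hj (hsUniq j d0 hjs hDj hd0s hd0)
  · push_neg at hEx
    refine ⟨n+2, by omega, c3, hp3, fun i => ?_⟩
    by_cases his : i = s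
    · exact his ▸ ⟨x, hxs⟩
    · exact hbv3 i his (hEx i his)

end Aux

theorem bChromaticNumber_deleteVert_le_of_five_le_girth {V : Type*} [Fintype V] [DecidableEq V]
    (G : SimpleGraph V) (hG : 5 ≤ G.egirth) (x : V) :
    (G.induce ({x}ᶜ : Set V)).bChromaticNumber ≤ G.bChromaticNumber + 1 := by
  classical
  have hT : ∀ {a b : V}, G.Adj x a → G.Adj x b → G.Adj a b → False := by
    intro a b hxa hxb hab
    have hc : (Walk.cons hxa (Walk.cons hab (Walk.cons hxb.symm Walk.nil))).IsCycle := by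
      simp [Walk.isCycle_def, Walk.isTrail_def, hxa.ne, hxb.ne, hab.ne, hxa.ne', hxb.ne',
        hab.ne', Sym2.eq_iff]
    have h5 := le_egirth.mp hG x _ hc
    norm_num at h5
  have hQ : ∀ {a b v : V}, G.Adj x a → G.Adj x b → a ≠ b → v ≠ x → G.Adj a v → G.Adj b v →
      False := by
    intro a b v hxa hxb hab hvx hav hbv
    have hxv : x ≠ v := Ne.symm hvx
    have hc : (Walk.cons hxa (Walk.cons hav (Walk.cons hbv.symm (Walk.cons hxb.symm
        Walk.nil)))).IsCycle := by
      simp [Walk.isCycle_def, Walk.isTrail_def, hxa.ne, hxb.ne, hav.ne, hbv.ne, hxa.ne',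
        hxb.ne', hav.ne', hbv.ne', hab, hab.symm, hxv, hxv.symm, Sym2.eq_iff]
    have h5 := le_egirth.mp hG x _ hc
    norm_num at h5
  have hbdd : BddAbove {k | ∃ c : V → Fin k, G.IsBColoring c} := by
    refine ⟨Fintype.card V + 1, fun k hk => ?_⟩
    obtain ⟨c, hc⟩ := hk
    have hsurj : Function.Surjective c := by
      intro i
      obtain ⟨v, hv, -⟩ := hc.2 i
      exact ⟨v, hv⟩
    have := Fintype.card_le_of_surjective c hsurj
    simp only [Fintype.card_fin] at this
    omega
  rw [SimpleGraph.bChromaticNumber, SimpleGraph.bChromaticNumber]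
  apply csSup_le'
  rintro k ⟨c, hc⟩
  match k with
  | 0 => exact Nat.zero_le _
  | 1 => exact Nat.succ_le_succ (Nat.zero_le _)
  | (n+2) =>
    have hxc : ∀ v : ({x}ᶜ : Set V), (v : V) ≠ x := fun v =>
      Set.mem_compl_singleton_iff.mp v.2
    set c0 : V → Fin (n+2) := fun v => if h : v = x then 0 else c ⟨v, by simp [h]⟩ with hc0
    have hc0v : ∀ (v : V) (h : v ≠ x), c0 v = c ⟨v, by simp [h]⟩ := by
      intro v h
      simp only [hc0, dif_neg h]
    have hc0v' : ∀ (v : ({x}ᶜ : Set V)), c0 ↑v = c v := by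
      intro v
      rw [hc0v ↑v (hxc v)]
    have hadj : ∀ (u v : ({x}ᶜ : Set V)), G.Adj ↑u ↑v →
        (G.induce ({x}ᶜ : Set V)).Adj u v := by
      intro u v h
      exact h
    have hprop : ∀ a b, a ≠ x → b ≠ x → G.Adj a b → c0 a ≠ c0 b := by
      intro a b ha hb hab
      have := hc.1 ⟨a, by simp [ha]⟩ ⟨b, by simp [hb]⟩ (hadj _ _ hab)
      rwa [← hc0v a ha, ← hc0v b hb] at this
    have hbv : ∀ i, ∃ v, BvtxAt G x c0 v i := by
      intro i
      obtain ⟨v, hv, hw⟩ := hc.2 i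
      refine ⟨↑v, hxc v, by rw [hc0v' v, hv], ?_⟩
      intro j hj
      obtain ⟨u, hu, hcu⟩ := hw j hj
      exact ⟨↑u, hxc u, hu, by rw [hc0v' u, hcu]⟩
    obtain ⟨m, hm, c', hbc⟩ := mainLemma hT hQ hprop hbv
    have : m ≤ sSup {k | ∃ c : V → Fin k, G.IsBColoring c} :=
      le_csSup hbdd ⟨c', hbc⟩
    omega
end

section
/- For every graph G, the b-chromatic number satisfies b(G) ≤ m(G), where m(G) is the m-degree of G. -/
/-- The m-degree of `G`: the largest `m` such that `G` has `m` vertices of degree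
at least `m - 1`. -/
noncomputable def SimpleGraph.mDegree {V : Type*} [Fintype V] (G : SimpleGraph V)
    [DecidableRel G.Adj] : ℕ :=
  sSup {m | ∃ s : Finset V, s.card = m ∧ ∀ v ∈ s, m - 1 ≤ G.degree v}

theorem bChromaticNumber_le_mDegree {V : Type*} [Fintype V]
    (G : SimpleGraph V) [DecidableRel G.Adj] :
    G.bChromaticNumber ≤ G.mDegree := by
  classical
  apply csSup_le'
  rintro k ⟨c, -, hb⟩
  choose b hb1 hb2 using hb
  have hbinj : Function.Injective b := fun i j h => by
    rw [← hb1 i, ← hb1 j, h]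
  have hdeg : ∀ i, k - 1 ≤ G.degree (b i) := by
    intro i
    choose u hu1 hu2 using hb2 i
    have : (Finset.univ.erase i).card ≤ (G.neighborFinset (b i)).card := by
      apply Finset.card_le_card_of_injOn (fun j => if h : j ≠ i then u j h else b i)
      · intro j hj
        simp only [Finset.mem_coe, Finset.mem_erase, Finset.mem_univ, and_true] at hj
        simp [hj, SimpleGraph.mem_neighborFinset, hu1 j hj]
      · intro j1 h1 j2 h2 heq
        simp only [Finset.coe_erase, Set.mem_diff, Finset.mem_coe, Finset.coe_univ,
          Set.mem_univ, true_and, Set.mem_singleton_iff] at h1 h2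
        simp only [dif_pos h1, dif_pos h2] at heq
        have := congrArg c heq
        rwa [hu2 j1 h1, hu2 j2 h2] at this
    rwa [Finset.card_erase_of_mem (Finset.mem_univ i), Finset.card_univ,
      Fintype.card_fin] at this
  apply le_csSup
  · refine ⟨Fintype.card V, ?_⟩
    rintro m ⟨s, hs, -⟩
    exact hs ▸ Finset.card_le_univ s
  · refine ⟨Finset.univ.image b, ?_, ?_⟩
    · rw [Finset.card_image_of_injective _ hbinj, Finset.card_univ, Fintype.card_fin]
    · intro v hv
      simp only [Finset.mem_image, Finset.mem_univ, true_and] at hv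
      obtain ⟨i, rfl⟩ := hv
      exact hdeg i
end

section
/- Let H be a chordal graph and let G₀ be the graph obtained from H by adding a new vertex x joined to every vertex of H. Then b(G₀ - {x}) = b(G₀) - 1. -/
/-- The graph obtained from `H` by adding a new vertex (`none`) joined to every
vertex of `H`. -/
def SimpleGraph.addUniversalVertex {W : Type*} (H : SimpleGraph W) : SimpleGraph (Option W) :=
  SimpleGraph.fromRel (fun u v => u = none ∨ ∃ a b, u = some a ∧ v = some b ∧ H.Adj a b)

-- For unbounded `s` both sides are the junk value `sSup = 0`.
theorem Nat.sSup_image_add_one_sub_one (s : Set ℕ) : sSup ((· + 1) '' s) - 1 = sSup s := by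
  by_cases hbdd : BddAbove s
  · rcases s.eq_empty_or_nonempty with rfl | hne
    · simp
    have hgreatest : IsGreatest ((· + 1) '' s) (sSup s + 1) :=
      ⟨Set.mem_image_of_mem _ (Nat.sSup_mem hne hbdd), Set.forall_mem_image.mpr fun a ha ↦
        Nat.add_le_add_right (le_csSup hbdd ha) 1⟩
    rw [hgreatest.csSup_eq, Nat.add_sub_cancel]
  · have hbdd' : ¬BddAbove ((· + 1) '' s) := fun ⟨b, hb⟩ ↦
      hbdd ⟨b, fun a ha ↦ (Nat.le_succ a).trans (hb (Set.mem_image_of_mem _ ha))⟩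
    rw [Nat.sSup_of_not_bddAbove hbdd, Nat.sSup_of_not_bddAbove hbdd']

namespace SimpleGraph

section IsBColoring

variable {V V' : Type*} {G : SimpleGraph V} {G' : SimpleGraph V'} {k m : ℕ}

theorem IsBColoring.comp_iso {c : V' → Fin k} (hc : G'.IsBColoring c) (e : G ≃g G') :
    G.IsBColoring (c ∘ e) := by
  refine ⟨fun u v huv ↦ hc.1 (e u) (e v) (e.map_adj_iff.mpr huv), fun i ↦ ?_⟩
  obtain ⟨v, hv, hdom⟩ := hc.2 i
  refine ⟨e.symm v, by simpa using hv, fun j hj ↦ ?_⟩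
  obtain ⟨u, hvu, hu⟩ := hdom j hj
  exact ⟨e.symm u, e.symm.map_adj_iff.mpr (by simpa using hvu), by simpa using hu⟩

theorem Iso.bChromaticNumber_eq (e : G ≃g G') : G.bChromaticNumber = G'.bChromaticNumber := by
  unfold bChromaticNumber
  congr 1
  ext k
  exact ⟨fun ⟨c, hc⟩ ↦ ⟨c ∘ e.symm, hc.comp_iso e.symm⟩, fun ⟨c, hc⟩ ↦ ⟨c ∘ e, hc.comp_iso e⟩⟩

theorem IsBColoring.equiv_comp {c : V → Fin k} (hc : G.IsBColoring c) (e : Fin k ≃ Fin m) :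
    G.IsBColoring (e ∘ c) := by
  refine ⟨fun u v huv h ↦ hc.1 u v huv (e.injective h), fun i ↦ ?_⟩
  obtain ⟨v, hv, hdom⟩ := hc.2 (e.symm i)
  refine ⟨v, by simp [hv], fun j hj ↦ ?_⟩
  obtain ⟨u, hvu, hu⟩ := hdom (e.symm j) (e.symm.injective.ne hj)
  exact ⟨u, hvu, by simp [hu]⟩

end IsBColoring

section addUniversalVertex

variable {W : Type*} (H : SimpleGraph W) {k : ℕ}

@[simp]
theorem addUniversalVertex_adj_none_some (a : W) : H.addUniversalVertex.Adj none (some a) := by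
  simp [addUniversalVertex]

@[simp]
theorem addUniversalVertex_adj_some_none (a : W) : H.addUniversalVertex.Adj (some a) none := by
  simp [addUniversalVertex]

@[simp]
theorem addUniversalVertex_adj_some_some {a b : W} :
    H.addUniversalVertex.Adj (some a) (some b) ↔ H.Adj a b := by
  simp only [addUniversalVertex, fromRel_adj, ne_eq, Option.some.injEq, reduceCtorEq, false_or,
    exists_and_left, exists_eq_left']
  exact ⟨fun h ↦ h.2.elim id .symm, fun h ↦ ⟨h.ne, .inl h⟩⟩

def embeddingAddUniversalVertex : H ↪g H.addUniversalVertex where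
  toEmbedding := .some
  map_rel_iff' := H.addUniversalVertex_adj_some_some

variable {H}

theorem IsBColoring.addUniversalVertex {c : W → Fin k} (hc : H.IsBColoring c) :
    H.addUniversalVertex.IsBColoring fun o ↦ o.elim (Fin.last k) (Fin.castSucc ∘ c) := by
  refine ⟨?_, fun i ↦ ?_⟩
  · rintro (_ | a) (_ | b) hab h
    · exact hab.ne rfl
    · exact (Fin.castSucc_lt_last _).ne' h
    · exact (Fin.castSucc_lt_last _).ne h
    · exact hc.1 a b (H.addUniversalVertex_adj_some_some.mp hab) (Fin.castSucc_injective _ h)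
  induction i using Fin.lastCases with
  | last =>
    refine ⟨none, rfl, fun j hj ↦ ?_⟩
    obtain ⟨j, rfl⟩ := Fin.exists_castSucc_eq.mpr hj
    obtain ⟨a, ha, -⟩ := hc.2 j
    exact ⟨some a, H.addUniversalVertex_adj_none_some a, by simp [ha]⟩
  | cast i =>
    obtain ⟨a, ha, hdom⟩ := hc.2 i
    refine ⟨some a, by simp [ha], fun j hj ↦ ?_⟩
    induction j using Fin.lastCases with
    | last => exact ⟨none, H.addUniversalVertex_adj_some_none a, rfl⟩
    | cast j =>
      obtain ⟨b, hab, hb⟩ := hdom j (Fin.castSucc_injective _ |>.ne_iff.mp hj)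
      exact ⟨some b, H.addUniversalVertex_adj_some_some.mpr hab, by simp [hb]⟩

theorem IsBColoring.of_addUniversalVertex {c : Option W → Fin (k + 1)}
    (hc : H.addUniversalVertex.IsBColoring c) (hnone : c none = Fin.last k) :
    ∃ c' : W → Fin k, H.IsBColoring c' := by
  have hne : ∀ a, c (some a) ≠ Fin.last k := fun a h ↦
    hc.1 _ _ (H.addUniversalVertex_adj_none_some a) (hnone.trans h.symm)
  have hsome : ∀ i : Fin k, ∀ o, c o = i.castSucc → ∃ a, o = some a := by
    rintro i (_ | a) h
    · exact absurd (hnone.symm.trans h) (Fin.castSucc_lt_last i).ne'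
    · exact ⟨a, rfl⟩
  refine ⟨fun a ↦ (c (some a)).castPred (hne a), fun a b hab h ↦ ?_, fun i ↦ ?_⟩
  · exact hc.1 _ _ (H.addUniversalVertex_adj_some_some.mpr hab) (by simpa using h)
  obtain ⟨v, hv, hdom⟩ := hc.2 i.castSucc
  obtain ⟨a, rfl⟩ := hsome i v hv
  refine ⟨a, by simp [hv], fun j hj ↦ ?_⟩
  obtain ⟨u, hau, hu⟩ := hdom j.castSucc (Fin.castSucc_injective _ |>.ne hj)
  obtain ⟨b, rfl⟩ := hsome j u hu
  exact ⟨b, H.addUniversalVertex_adj_some_some.mp hau, by simp [hu]⟩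

theorem exists_isBColoring_addUniversalVertex_iff :
    (∃ c : Option W → Fin (k + 1), H.addUniversalVertex.IsBColoring c) ↔
      ∃ c : W → Fin k, H.IsBColoring c := by
  refine ⟨fun ⟨c, hc⟩ ↦ ?_, fun ⟨c, hc⟩ ↦ ⟨_, hc.addUniversalVertex⟩⟩
  exact (hc.equiv_comp (Equiv.swap (c none) (Fin.last k))).of_addUniversalVertex (by simp)

theorem bChromaticNumber_addUniversalVertex_sub_one :
    H.addUniversalVertex.bChromaticNumber - 1 = H.bChromaticNumber := by
  have hsizes : {k | ∃ c : Option W → Fin k, H.addUniversalVertex.IsBColoring c} =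
      (· + 1) '' {k | ∃ c : W → Fin k, H.IsBColoring c} := by
    ext (_ | k)
    · simp
    · simp [exists_isBColoring_addUniversalVertex_iff]
  rw [bChromaticNumber, hsizes, Nat.sSup_image_add_one_sub_one, bChromaticNumber]

end addUniversalVertex

end SimpleGraph

theorem bChromaticNumber_deleteUniversalVertex_general {W : Type*} (H : SimpleGraph W) :
    (H.addUniversalVertex.induce ({(none : Option W)}ᶜ : Set (Option W))).bChromaticNumber =
      H.addUniversalVertex.bChromaticNumber - 1 := by
  rw [compl_eq_comm.mp (Set.compl_range_some W), H.bChromaticNumber_addUniversalVertex_sub_one]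
  exact H.embeddingAddUniversalVertex.isoInduceRange.symm.bChromaticNumber_eq

theorem bChromaticNumber_deleteUniversalVertex {W : Type*} [Fintype W] [DecidableEq W]
    (H : SimpleGraph W) (hH : H.IsChordalGraph) :
    (H.addUniversalVertex.induce ({(none : Option W)}ᶜ : Set (Option W))).bChromaticNumber =
      H.addUniversalVertex.bChromaticNumber - 1 :=
  bChromaticNumber_deleteUniversalVertex_general H
end
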